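/- arXiv:1212.3314 — 9 statements merged into one kernel-verified Lean document; each statement's English description precedes it below -/
import Mathlib

section
/- Let x : ℝ^m → ℝ^N be a smooth function. Suppose that for every smooth regular curve Γ : [0,1] → ℝ^m (with Γ′(s) ≠ 0 for all s) and every smooth variation δx : ℝ^m → ℝ^N that vanishes on a neighbourhood of the endpoints Γ(0) and Γ(1), the first variation satisfies d/dε|_{ε=0} S_Γ(x + ε δx) = 0. Then x satisfies the multi-time Euler–Lagrange equations: (i) for all 1 ≤ α ≠ β ≤ m, ∂L_α/∂v_β(x, x_{t_1}, …, x_{t_m}) = 0; (ii) the functions ∂L_α/∂v_α(x, x_{t_1}, …, x_{t_m}) coincide for all α = 1, …, m, with common value a function p : ℝ^m → ℝ^N; (iii) ∂p/∂t_α = ∂L_α/∂x(x, x_{t_1}, …, x_{t_m}) for all α. -/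
/-!
Test the criticality hypothesis only on straight segments `s ↦ t₀ + s • v` and on variations
`ψ • eⱼ` with scalar `ψ`: the first variation becomes the one-dimensional integral
`∫₀¹ Σ_α v_α (ψ ∂L_α/∂x_j + Σ_β ∂_β ψ ∂L_α/∂(v_β)_j) ds` along the segment.

* For `ψ t = ℓ (t - t₀) * g (k (t - t₀))` with `ℓ v = 0`, `k v = 1` and `g` a bump in `(0, 1)`,
  `ψ` vanishes on the segment and has gradient `g s • ℓ` there, so the fundamental lemma gives
  `Σ_{α,β} v_α ℓ_β ∂L_α/∂v_β = 0` whenever `ℓ v = 0`. The choices `(v, ℓ) = (e_α, e_β)` and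
  `(e_α + e_β, e_α - e_β)` show that the matrix `(∂L_α/∂v_β)` is scalar: this is (i) and (ii).
* For `ψ t = g (k (t - t₀))` and `v = k = e_α` the integral is `∫ (g ∂L_α/∂x + g' ∂L_α/∂v_α)`,
  and integration by parts (du Bois-Reymond) gives (iii).
-/

noncomputable section

/-- Partial derivative `x_{t_α}` of a multi-time function. -/
def pdv {m N : ℕ} (x : (Fin m → ℝ) → (Fin N → ℝ)) (α : Fin m) (t : Fin m → ℝ) :
    Fin N → ℝ :=
  fderiv ℝ x t (Pi.single α 1)

/-- The first jet `(x_{t_1}, …, x_{t_m})` of a multi-time function. -/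
def jet {m N : ℕ} (x : (Fin m → ℝ) → (Fin N → ℝ)) (t : Fin m → ℝ) :
    Fin m → Fin N → ℝ :=
  fun β => pdv x β t

/-- Gradient `∂L/∂x` of a Lagrangian `L(x, v_1, …, v_m)` in the `x`-slot. -/
def gradX {m N : ℕ} (L : (Fin N → ℝ) → (Fin m → (Fin N → ℝ)) → ℝ)
    (a : Fin N → ℝ) (V : Fin m → (Fin N → ℝ)) : Fin N → ℝ :=
  fun j => fderiv ℝ (fun a' => L a' V) a (Pi.single j 1)

/-- Gradient `∂L/∂v_β` of a Lagrangian `L(x, v_1, …, v_m)` in the `v_β`-slot. -/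
def gradV {m N : ℕ} (L : (Fin N → ℝ) → (Fin m → (Fin N → ℝ)) → ℝ)
    (β : Fin m) (a : Fin N → ℝ) (V : Fin m → (Fin N → ℝ)) : Fin N → ℝ :=
  fun j => fderiv ℝ (fun w => L a (Function.update V β w)) (V β) (Pi.single j 1)

/-- Action `S_Γ(x) = ∫₀¹ Σ_α L_α(x(Γ(s)), x_{t_1}(Γ(s)), …, x_{t_m}(Γ(s))) Γ_α'(s) ds`. -/
def action {m N : ℕ} (L : Fin m → (Fin N → ℝ) → (Fin m → (Fin N → ℝ)) → ℝ)
    (x : (Fin m → ℝ) → (Fin N → ℝ)) (Γ : ℝ → (Fin m → ℝ)) : ℝ :=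
  ∫ s in (0:ℝ)..1, ∑ α, L α (x (Γ s)) (jet x (Γ s)) * deriv Γ s α

open Set Function MeasureTheory Filter Topology
open scoped ContDiff

theorem eqOn_zero_of_forall_integral_mul_eq_zero {f : ℝ → ℝ} {a b : ℝ} (hab : a ≤ b)
    (hf : Continuous f)
    (h : ∀ g : ℝ → ℝ, ContDiff ℝ ∞ g → tsupport g ⊆ Ioo a b → ∫ s in a..b, f s * g s = 0) :
    EqOn f 0 (Ioo a b) := by
  have hae : ∀ᵐ s, s ∈ Ioo a b → f s = 0 := by
    refine isOpen_Ioo.ae_eq_zero_of_integral_contDiff_smul_eq_zero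
      (hf.locallyIntegrable.locallyIntegrableOn _) fun g hg _ hgs => ?_
    have hg0 : ∀ s ∉ Ioo a b, g s • f s = 0 := fun s hs => by
      rw [image_eq_zero_of_notMem_tsupport fun h => hs (hgs h), zero_smul]
    rw [← setIntegral_eq_integral_of_forall_compl_eq_zero hg0, ← integral_Ioc_eq_integral_Ioo,
      ← intervalIntegral.integral_of_le hab]
    simpa only [smul_eq_mul, mul_comm] using h g hg hgs
  exact Measure.eqOn_open_of_ae_eq ((ae_restrict_iff' measurableSet_Ioo).mpr hae) isOpen_Ioo
    hf.continuousOn continuousOn_const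

theorem deriv_eqOn_of_forall_integral_eq_zero {f P : ℝ → ℝ} {a b : ℝ} (hab : a ≤ b)
    (hf : Continuous f) (hP : ContDiff ℝ 1 P)
    (h : ∀ g : ℝ → ℝ, ContDiff ℝ ∞ g → tsupport g ⊆ Ioo a b →
      ∫ s in a..b, (f s * g s + P s * deriv g s) = 0) :
    EqOn (deriv P) f (Ioo a b) := by
  have hP' : Continuous (deriv P) := hP.continuous_deriv le_rfl
  have key := eqOn_zero_of_forall_integral_mul_eq_zero hab (hf.sub hP') fun g hg hgs => by
    have hg1 : ContDiff ℝ 1 g := hg.of_le (by simp)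
    have hga : g a = 0 := image_eq_zero_of_notMem_tsupport fun h => (hgs h).1.false
    have hgb : g b = 0 := image_eq_zero_of_notMem_tsupport fun h => (hgs h).2.false
    have hparts := intervalIntegral.integral_mul_deriv_eq_deriv_mul
      (fun s _ => (hP.differentiable one_ne_zero s).hasDerivAt)
      (fun s _ => (hg1.differentiable one_ne_zero s).hasDerivAt)
      (hP'.intervalIntegrable a b) ((hg1.continuous_deriv le_rfl).intervalIntegrable a b)
    have hfg : IntervalIntegrable (fun s => f s * g s) volume a b :=
      (hf.mul hg1.continuous).intervalIntegrable a b
    have hPg : IntervalIntegrable (fun s => deriv P s * g s) volume a b :=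
      (hP'.mul hg1.continuous).intervalIntegrable a b
    have hPg' : IntervalIntegrable (fun s => P s * deriv g s) volume a b :=
      (hP.continuous.mul (hg1.continuous_deriv le_rfl)).intervalIntegrable a b
    have := h g hg hgs
    rw [intervalIntegral.integral_add hfg hPg', hparts, hga, hgb] at this
    simp only [Pi.sub_apply, sub_mul, intervalIntegral.integral_sub hfg hPg]
    linarith
  exact fun s hs => (sub_eq_zero.mp (key hs)).symm

theorem hasDerivAt_intervalIntegral_of_continuous {H H' : ℝ → ℝ → ℝ} (a b ε₀ : ℝ)
    (hH : Continuous (uncurry H)) (hH' : Continuous (uncurry H'))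
    (hd : ∀ ε s, HasDerivAt (H · s) (H' ε s) ε) :
    HasDerivAt (fun ε => ∫ s in a..b, H ε s) (∫ s in a..b, H' ε₀ s) ε₀ := by
  obtain ⟨C, hC⟩ := (isCompact_closedBall ε₀ 1 |>.prod isCompact_uIcc).exists_bound_of_continuousOn
    hH'.continuousOn
  refine (intervalIntegral.hasDerivAt_integral_of_dominated_loc_of_deriv_le (bound := fun _ => C)
    (Metric.ball_mem_nhds ε₀ one_pos)
    (Eventually.of_forall fun ε => (hH.comp (Continuous.prodMk_right ε)).aestronglyMeasurable)
    ((hH.comp (Continuous.prodMk_right ε₀)).intervalIntegrable a b)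
    (hH'.comp (Continuous.prodMk_right ε₀)).aestronglyMeasurable
    (Eventually.of_forall fun s hs ε hε => hC (ε, s) ⟨Metric.ball_subset_closedBall hε,
      uIoc_subset_uIcc hs⟩)
    intervalIntegrable_const (Eventually.of_forall fun s _ ε _ => hd ε s)).2

theorem eventuallyEq_zero_comp_sub_of_tsupport_subset {E : Type*} [NormedAddCommGroup E]
    [NormedSpace ℝ E] {g : ℝ → ℝ} (hg : tsupport g ⊆ Ioo 0 1) {k : E →L[ℝ] ℝ} {v : E}
    (hk : k v = 1) (t₀ : E) :
    (fun t => g (k (t - t₀))) =ᶠ[𝓝 t₀] 0 ∧ (fun t => g (k (t - t₀))) =ᶠ[𝓝 (t₀ + v)] 0 := by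
  have hvanish : ∀ t, k (t - t₀) ∉ Ioo 0 1 → (fun t => g (k (t - t₀))) =ᶠ[𝓝 t] 0 := fun t ht =>
    ((k.continuous.comp (continuous_sub_right t₀)).tendsto t).eventually
      (notMem_tsupport_iff_eventuallyEq.mp fun h => ht (hg h))
  exact ⟨hvanish _ (by simp), hvanish _ (by simp [hk])⟩

theorem hasFDerivAt_comp_clm_sub_const {E : Type*} [NormedAddCommGroup E] [NormedSpace ℝ E]
    {g : ℝ → ℝ} (k : E →L[ℝ] ℝ) (t₀ t : E) (hg : DifferentiableAt ℝ g (k (t - t₀))) :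
    HasFDerivAt (fun t => g (k (t - t₀))) (deriv g (k (t - t₀)) • k) t :=
  hg.hasDerivAt.comp_hasFDerivAt t ((hasFDerivAt_comp_sub t₀).mpr k.hasFDerivAt)

section Gradients

variable {m N : ℕ} {L : (Fin N → ℝ) → (Fin m → Fin N → ℝ) → ℝ}

theorem gradX_apply {a : Fin N → ℝ} {V : Fin m → Fin N → ℝ}
    (hL : DifferentiableAt ℝ (uncurry L) (a, V)) (j : Fin N) :
    gradX L a V j = fderiv ℝ (uncurry L) (a, V) (Pi.single j 1, 0) := by
  have h := hL.hasFDerivAt.comp a (hasFDerivAt_prodMk_left (𝕜 := ℝ) a V)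
  rw [gradX, show (fun a' => L a' V) = uncurry L ∘ fun a' => (a', V) from rfl, h.fderiv]
  rfl

theorem gradV_apply {a : Fin N → ℝ} {V : Fin m → Fin N → ℝ}
    (hL : DifferentiableAt ℝ (uncurry L) (a, V)) (β : Fin m) (j : Fin N) :
    gradV L β a V j = fderiv ℝ (uncurry L) (a, V) (0, Pi.single β (Pi.single j 1)) := by
  have hin := (hasFDerivAt_const (𝕜 := ℝ) a (V β)).prodMk
    (hasFDerivAt_update (𝕜 := ℝ) (E := fun _ => Fin N → ℝ) V (i := β) (V β))
  have hL' : DifferentiableAt ℝ (uncurry L) (a, update V β (V β)) := by rwa [update_eq_self]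
  have h := hL'.hasFDerivAt.comp (V β) hin
  rw [update_eq_self] at h
  rw [gradV, show (fun w => L a (update V β w)) = uncurry L ∘ fun w => (a, update V β w) from rfl,
    h.fderiv]
  simp only [ContinuousLinearMap.comp_apply, ContinuousLinearMap.prod_apply, zero_apply]
  congr 2
  ext i : 1
  rcases eq_or_ne i β with rfl | hi <;> simp [*]

theorem map_smul_prod_pi_smul {ι E : Type*} [Fintype ι] [DecidableEq ι] [AddCommGroup E]
    [Module ℝ E] [TopologicalSpace E] (D : E × (ι → E) →L[ℝ] ℝ) (b : ℝ) (W : ι → ℝ) (c : E) :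
    D (b • c, fun i => W i • c) = b * D (c, 0) + ∑ i, W i * D (0, Pi.single i c) := by
  have h : ((b • c, fun i => W i • c) : E × (ι → E))
      = b • (c, 0) + ∑ i, W i • (0, Pi.single i c) := by
    ext i
    · simp [Prod.fst_sum]
    · simp [Prod.snd_sum, Finset.sum_apply, Pi.single_apply]
  simp only [h, map_add, map_smul, map_sum, smul_eq_mul]

theorem fderiv_uncurry_smul_single {a : Fin N → ℝ} {V : Fin m → Fin N → ℝ}
    (hL : DifferentiableAt ℝ (uncurry L) (a, V)) (b : ℝ) (W : Fin m → ℝ) (j : Fin N) :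
    fderiv ℝ (uncurry L) (a, V) (b • Pi.single j 1, fun β => W β • Pi.single j 1)
      = b * gradX L a V j + ∑ β, W β * gradV L β a V j := by
  simp only [map_smul_prod_pi_smul, gradX_apply hL, gradV_apply hL]

end Gradients

section Jets

variable {m N : ℕ}

theorem contDiff_jet {x : (Fin m → ℝ) → (Fin N → ℝ)} (hx : ContDiff ℝ ∞ x) :
    ContDiff ℝ ∞ (jet x) :=
  contDiff_pi.mpr fun _ => (hx.fderiv_right le_rfl).clm_apply contDiff_const

theorem jet_add_smul {x δx : (Fin m → ℝ) → (Fin N → ℝ)} {t : Fin m → ℝ}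
    (hx : DifferentiableAt ℝ x t) (hδx : DifferentiableAt ℝ δx t) (ε : ℝ) :
    jet (fun t => x t + ε • δx t) t = jet x t + ε • jet δx t := by
  funext β
  simp only [jet, pdv]
  rw [fderiv_fun_add (g := fun y => ε • δx y) hx (hδx.const_smul ε), fderiv_fun_const_smul hδx]
  rfl

theorem jet_smul_const {ψ : (Fin m → ℝ) → ℝ} {t : Fin m → ℝ} (hψ : DifferentiableAt ℝ ψ t)
    (c : Fin N → ℝ) :
    jet (fun t => ψ t • c) t = fun β => fderiv ℝ ψ t (Pi.single β 1) • c := by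
  funext β
  simp [jet, pdv, fderiv_smul_const hψ]

variable {L : (Fin N → ℝ) → (Fin m → Fin N → ℝ) → ℝ} {x : (Fin m → ℝ) → (Fin N → ℝ)}

theorem contDiff_gradX_jet (hL : ContDiff ℝ ∞ (uncurry L)) (hx : ContDiff ℝ ∞ x) :
    ContDiff ℝ ∞ fun t => gradX L (x t) (jet x t) := by
  refine contDiff_pi.mpr fun j => ?_
  simp_rw [gradX_apply (hL.differentiable (by simp) _)]
  exact ((hL.fderiv_right le_rfl).comp (hx.prodMk (contDiff_jet hx))).clm_apply contDiff_const

theorem contDiff_gradV_jet (hL : ContDiff ℝ ∞ (uncurry L)) (hx : ContDiff ℝ ∞ x) (β : Fin m) :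
    ContDiff ℝ ∞ fun t => gradV L β (x t) (jet x t) := by
  refine contDiff_pi.mpr fun j => ?_
  simp_rw [gradV_apply (hL.differentiable (by simp) _)]
  exact ((hL.fderiv_right le_rfl).comp (hx.prodMk (contDiff_jet hx))).clm_apply contDiff_const

end Jets

theorem hasDerivAt_action {m N : ℕ} {L : Fin m → (Fin N → ℝ) → (Fin m → Fin N → ℝ) → ℝ}
    {x δx : (Fin m → ℝ) → (Fin N → ℝ)} {Γ : ℝ → (Fin m → ℝ)}
    (hL : ∀ α, ContDiff ℝ ∞ (uncurry (L α))) (hx : ContDiff ℝ ∞ x) (hδx : ContDiff ℝ ∞ δx)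
    (hΓ : ContDiff ℝ 1 Γ) :
    HasDerivAt (fun ε : ℝ => action L (fun t => x t + ε • δx t) Γ)
      (∫ s in (0:ℝ)..1, ∑ α, fderiv ℝ (uncurry (L α)) (x (Γ s), jet x (Γ s))
        (δx (Γ s), jet δx (Γ s)) * deriv Γ s α) 0 := by
  set u : (Fin m → ℝ) → (Fin N → ℝ) × (Fin m → Fin N → ℝ) := fun t => (x t, jet x t)
  set w : (Fin m → ℝ) → (Fin N → ℝ) × (Fin m → Fin N → ℝ) := fun t => (δx t, jet δx t)
  have hu : Continuous u := hx.continuous.prodMk (contDiff_jet hx).continuous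
  have hw : Continuous w := hδx.continuous.prodMk (contDiff_jet hδx).continuous
  have hΓ' : ∀ α, Continuous fun s => deriv Γ s α :=
    fun α => (continuous_apply α).comp (hΓ.continuous_deriv le_rfl)
  have hpath : Continuous fun p : ℝ × ℝ => u (Γ p.2) + p.1 • w (Γ p.2) :=
    (hu.comp (hΓ.continuous.comp continuous_snd)).add
      (continuous_fst.smul (hw.comp (hΓ.continuous.comp continuous_snd)))
  have hact : (fun ε : ℝ => action L (fun t => x t + ε • δx t) Γ) = fun ε =>
      ∫ s in (0:ℝ)..1, ∑ α, uncurry (L α) (u (Γ s) + ε • w (Γ s)) * deriv Γ s α := by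
    funext ε
    simp [action, u, w, jet_add_smul (hx.differentiable (by simp) _)
      (hδx.differentiable (by simp) _)]
  have hline : ∀ s ε, HasDerivAt (fun e : ℝ => u (Γ s) + e • w (Γ s)) (w (Γ s)) ε := fun s ε => by
    simpa using ((hasDerivAt_id ε).smul_const (w (Γ s))).const_add (u (Γ s))
  rw [hact]
  convert hasDerivAt_intervalIntegral_of_continuous 0 1 0
    (H := fun ε s => ∑ α, uncurry (L α) (u (Γ s) + ε • w (Γ s)) * deriv Γ s α)
    (H' := fun ε s => ∑ α, fderiv ℝ (uncurry (L α)) (u (Γ s) + ε • w (Γ s)) (w (Γ s))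
      * deriv Γ s α)
    (continuous_finsetSum _ fun α _ => ((hL α).continuous.comp hpath).mul
      ((hΓ' α).comp continuous_snd))
    (continuous_finsetSum _ fun α _ =>
      ((((hL α).continuous_fderiv (by simp)).comp hpath).clm_apply
        (hw.comp (hΓ.continuous.comp continuous_snd))).mul ((hΓ' α).comp continuous_snd))
    (fun ε s => HasDerivAt.fun_sum fun α _ =>
      (((hL α).differentiable (by simp) _).hasFDerivAt.comp_hasDerivAt ε (hline s ε)).mul_const _)
    using 1
  simp [u, w]

section CriticalPoints

variable {m N : ℕ} {L : Fin m → (Fin N → ℝ) → (Fin m → Fin N → ℝ) → ℝ}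
  {x : (Fin m → ℝ) → (Fin N → ℝ)}

def IsActionCritical (L : Fin m → (Fin N → ℝ) → (Fin m → Fin N → ℝ) → ℝ)
    (x : (Fin m → ℝ) → (Fin N → ℝ)) : Prop :=
  ∀ Γ : ℝ → (Fin m → ℝ), ContDiff ℝ ∞ Γ → (∀ s ∈ Icc (0:ℝ) 1, deriv Γ s ≠ 0) →
    ∀ δx : (Fin m → ℝ) → (Fin N → ℝ), ContDiff ℝ ∞ δx →
      (∀ᶠ t in 𝓝 (Γ 0), δx t = 0) → (∀ᶠ t in 𝓝 (Γ 1), δx t = 0) →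
      deriv (fun ε : ℝ => action L (fun t => x t + ε • δx t) Γ) 0 = 0

namespace IsActionCritical

variable (hcrit : IsActionCritical L x) (hL : ∀ α, ContDiff ℝ ∞ (uncurry (L α)))
  (hx : ContDiff ℝ ∞ x)
include hcrit hL hx

theorem integral_segment_eq_zero {t₀ v : Fin m → ℝ} (hv : v ≠ 0) {ψ : (Fin m → ℝ) → ℝ}
    (hψ : ContDiff ℝ ∞ ψ) (h₀ : ψ =ᶠ[𝓝 t₀] 0) (h₁ : ψ =ᶠ[𝓝 (t₀ + v)] 0) (j : Fin N) :
    ∫ s in (0:ℝ)..1, ∑ α, (ψ (t₀ + s • v) * gradX (L α) (x (t₀ + s • v)) (jet x (t₀ + s • v)) j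
      + ∑ β, fderiv ℝ ψ (t₀ + s • v) (Pi.single β 1)
        * gradV (L α) β (x (t₀ + s • v)) (jet x (t₀ + s • v)) j) * v α = 0 := by
  set Γ : ℝ → (Fin m → ℝ) := fun s => t₀ + s • v
  have hΓ : ContDiff ℝ ∞ Γ := contDiff_const.add (contDiff_id.smul contDiff_const)
  have hΓ' : ∀ s, deriv Γ s = v := fun s => by
    simpa only [one_smul] using (((hasDerivAt_id' s).smul_const v).const_add t₀).deriv
  have hδx : ContDiff ℝ ∞ fun t => ψ t • (Pi.single j 1 : Fin N → ℝ) := hψ.smul contDiff_const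
  have hvar := hcrit Γ hΓ (fun s _ => hΓ' s ▸ hv) _ hδx
    (by simpa [Γ] using h₀.mono fun t ht => by simp [ht])
    (by simpa [Γ] using h₁.mono fun t ht => by simp [ht])
  rw [(hasDerivAt_action hL hx hδx (hΓ.of_le (by simp))).deriv] at hvar
  refine Eq.trans ?_ hvar
  refine intervalIntegral.integral_congr fun s _ => Finset.sum_congr rfl fun α _ => ?_
  rw [hΓ', jet_smul_const (hψ.differentiable (by simp) _),
    fderiv_uncurry_smul_single ((hL α).differentiable (by simp) _)]

theorem sum_gradV_eq_zero {v : Fin m → ℝ} {ℓ k : (Fin m → ℝ) →L[ℝ] ℝ} (hℓ : ℓ v = 0)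
    (hk : k v = 1) (t : Fin m → ℝ) (j : Fin N) :
    ∑ α, (∑ β, ℓ (Pi.single β 1) * gradV (L α) β (x t) (jet x t) j) * v α = 0 := by
  set F : (Fin m → ℝ) → ℝ :=
    fun t => ∑ α, (∑ β, ℓ (Pi.single β 1) * gradV (L α) β (x t) (jet x t) j) * v α with hF_def
  have hF : Continuous F := by
    have := fun α β => (contDiff_gradV_jet (hL α) hx β).continuous
    fun_prop
  have hv : v ≠ 0 := fun h => by simp [h] at hk
  set t₀ := t - (1/2 : ℝ) • v
  have key := eqOn_zero_of_forall_integral_mul_eq_zero zero_le_one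
    (hF.comp (by fun_prop : Continuous fun s : ℝ => t₀ + s • v)) fun g hg hgs => by
    have hgd : Differentiable ℝ g := hg.differentiable (by simp)
    set ψ : (Fin m → ℝ) → ℝ := fun t => ℓ (t - t₀) * g (k (t - t₀))
    have hψ : ContDiff ℝ ∞ ψ := by fun_prop
    have hψ_seg : ∀ s : ℝ, ψ (t₀ + s • v) = 0 ∧ fderiv ℝ ψ (t₀ + s • v) = g s • ℓ := fun s => by
      have hmul := ((hasFDerivAt_comp_sub t₀).mpr ℓ.hasFDerivAt).fun_mul
        (hasFDerivAt_comp_clm_sub_const k t₀ (t₀ + s • v) (hgd _))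
      refine ⟨by simp [ψ, hℓ], ?_⟩
      rw [hmul.fderiv]
      simp [hℓ, hk]
    obtain ⟨h₀, h₁⟩ := eventuallyEq_zero_comp_sub_of_tsupport_subset hgs hk t₀
    have := hcrit.integral_segment_eq_zero hL hx hv hψ
      (h₀.mono fun _ ht => mul_eq_zero_of_right _ ht)
      (h₁.mono fun _ ht => mul_eq_zero_of_right _ ht) j
    refine Eq.trans ?_ this
    refine intervalIntegral.integral_congr fun s _ => ?_
    simp only [hψ_seg, hF_def, Function.comp_apply, zero_mul, zero_add, Finset.sum_mul,
      smul_apply, smul_eq_mul]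
    exact Finset.sum_congr rfl fun α _ => Finset.sum_congr rfl fun β _ => by ring
  simpa [t₀] using key (show (1/2 : ℝ) ∈ Ioo 0 1 by norm_num)

theorem fderiv_sum_gradV_eq {v : Fin m → ℝ} {k : (Fin m → ℝ) →L[ℝ] ℝ} (hk : k v = 1)
    (t : Fin m → ℝ) (j : Fin N) :
    fderiv ℝ (fun t => ∑ α, (∑ β, k (Pi.single β 1) * gradV (L α) β (x t) (jet x t) j) * v α) t v
      = ∑ α, gradX (L α) (x t) (jet x t) j * v α := by
  set P : (Fin m → ℝ) → ℝ :=
    fun t => ∑ α, (∑ β, k (Pi.single β 1) * gradV (L α) β (x t) (jet x t) j) * v α with hP_def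
  set A : (Fin m → ℝ) → ℝ := fun t => ∑ α, gradX (L α) (x t) (jet x t) j * v α with hA_def
  have hP : ContDiff ℝ ∞ P := by
    have := fun α β => (contDiff_pi.mp (contDiff_gradV_jet (hL α) hx β)) j
    fun_prop
  have hA : Continuous A := by
    have := fun α => (contDiff_gradX_jet (hL α) hx).continuous
    fun_prop
  have hv : v ≠ 0 := fun h => by simp [h] at hk
  set t₀ := t - (1/2 : ℝ) • v
  have hseg : ∀ s : ℝ, HasDerivAt (fun s : ℝ => t₀ + s • v) v s := fun s => by
    simpa only [one_smul] using ((hasDerivAt_id' s).smul_const v).const_add t₀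
  have hPseg : ContDiff ℝ 1 fun s : ℝ => P (t₀ + s • v) :=
    (hP.comp (by fun_prop : ContDiff ℝ ∞ fun s : ℝ => t₀ + s • v)).of_le (by simp)
  have key := deriv_eqOn_of_forall_integral_eq_zero zero_le_one
    (hA.comp (by fun_prop : Continuous fun s : ℝ => t₀ + s • v)) hPseg fun g hg hgs => by
    have hgd : Differentiable ℝ g := hg.differentiable (by simp)
    set ψ : (Fin m → ℝ) → ℝ := fun t => g (k (t - t₀))
    have hψ : ContDiff ℝ ∞ ψ := by fun_prop
    have hψ_seg : ∀ s : ℝ, ψ (t₀ + s • v) = g s ∧ fderiv ℝ ψ (t₀ + s • v) = deriv g s • k :=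
      fun s => ⟨by simp [ψ, hk], by
        rw [(hasFDerivAt_comp_clm_sub_const k t₀ (t₀ + s • v) (hgd _)).fderiv]
        simp [hk]⟩
    obtain ⟨h₀, h₁⟩ := eventuallyEq_zero_comp_sub_of_tsupport_subset hgs hk t₀
    have := hcrit.integral_segment_eq_zero hL hx hv hψ h₀ h₁ j
    refine Eq.trans ?_ this
    refine intervalIntegral.integral_congr fun s _ => ?_
    simp only [hψ_seg, hA_def, hP_def, Function.comp_apply, smul_apply, smul_eq_mul,
      add_mul, Finset.sum_add_distrib, Finset.sum_mul]
    congr 1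
    · exact Finset.sum_congr rfl fun α _ => by ring
    · exact Finset.sum_congr rfl fun α _ => Finset.sum_congr rfl fun β _ => by ring
  have hchain : HasDerivAt (fun s : ℝ => P (t₀ + s • v)) (fderiv ℝ P (t₀ + (1/2 : ℝ) • v) v)
      (1/2) := (hP.differentiable (by simp) _).hasFDerivAt.comp_hasDerivAt _ (hseg _)
  have hmid := key (show (1/2 : ℝ) ∈ Ioo 0 1 by norm_num)
  rwa [hchain.deriv, Function.comp_apply, show t₀ + (1/2 : ℝ) • v = t by simp [t₀]] at hmid

theorem gradV_eq_zero_of_ne {α β : Fin m} (hαβ : α ≠ β) (t : Fin m → ℝ) :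
    gradV (L α) β (x t) (jet x t) = 0 := by
  funext j
  have := hcrit.sum_gradV_eq_zero hL hx (v := Pi.single α 1) (ℓ := .proj β) (k := .proj α)
    (by simp [hαβ.symm]) (by simp) t j
  simpa [Pi.single_apply] using this

theorem gradV_self_eq (α β : Fin m) (t : Fin m → ℝ) :
    gradV (L α) α (x t) (jet x t) = gradV (L β) β (x t) (jet x t) := by
  rcases eq_or_ne α β with rfl | hαβ
  · rfl
  funext j
  have := hcrit.sum_gradV_eq_zero hL hx (v := Pi.single α 1 + Pi.single β 1)
    (ℓ := .proj α - .proj β) (k := .proj α) (by simp [hαβ, hαβ.symm]) (by simp [hαβ]) t j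
  have hαβ' := congrFun (hcrit.gradV_eq_zero_of_ne hL hx hαβ t) j
  have hβα := congrFun (hcrit.gradV_eq_zero_of_ne hL hx hαβ.symm t) j
  simp only [Pi.zero_apply] at hαβ' hβα
  simp [Pi.single_apply, sub_mul, mul_add, Finset.sum_add_distrib, Finset.sum_sub_distrib, ite_mul,
    hαβ', hβα] at this
  linarith

theorem fderiv_gradV_self (α : Fin m) (t : Fin m → ℝ) :
    fderiv ℝ (fun t => gradV (L α) α (x t) (jet x t)) t (Pi.single α 1)
      = gradX (L α) (x t) (jet x t) := by
  funext j
  have := hcrit.fderiv_sum_gradV_eq hL hx (v := Pi.single α 1) (k := .proj α) (by simp) t j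
  simp [Pi.single_apply] at this
  rw [← this, fderiv_apply ((contDiff_gradV_jet (hL α) hx α).differentiable (by simp) t)]
  rfl

end IsActionCritical

end CriticalPoints

/-- If a smooth `x : ℝ^m → ℝ^N` is a critical point of `S_Γ` for every
smooth regular curve `Γ` and all smooth variations vanishing near the endpoints, then `x`
satisfies the multi-time Euler–Lagrange equations. -/
theorem multitime_EL_of_critical {m N : ℕ}
    (L : Fin m → (Fin N → ℝ) → (Fin m → (Fin N → ℝ)) → ℝ)
    (hL : ∀ α, ContDiff ℝ (⊤ : ℕ∞)
      (fun q : (Fin N → ℝ) × (Fin m → (Fin N → ℝ)) => L α q.1 q.2))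
    (x : (Fin m → ℝ) → (Fin N → ℝ)) (hx : ContDiff ℝ (⊤ : ℕ∞) x)
    (hcrit : ∀ Γ : ℝ → (Fin m → ℝ), ContDiff ℝ (⊤ : ℕ∞) Γ →
      (∀ s ∈ Set.Icc (0:ℝ) 1, deriv Γ s ≠ 0) →
      ∀ δx : (Fin m → ℝ) → (Fin N → ℝ), ContDiff ℝ (⊤ : ℕ∞) δx →
        (∀ᶠ t in nhds (Γ 0), δx t = 0) → (∀ᶠ t in nhds (Γ 1), δx t = 0) →
        deriv (fun ε : ℝ => action L (fun t => x t + ε • δx t) Γ) 0 = 0) :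
    (∀ t : Fin m → ℝ, ∀ α β : Fin m, α ≠ β → gradV (L α) β (x t) (jet x t) = 0) ∧
    (∃ p : (Fin m → ℝ) → (Fin N → ℝ),
      (∀ (t : Fin m → ℝ) (α : Fin m), gradV (L α) α (x t) (jet x t) = p t) ∧
      (∀ (t : Fin m → ℝ) (α : Fin m), pdv p α t = gradX (L α) (x t) (jet x t))) := by
  have hcrit : IsActionCritical L x := hcrit
  refine ⟨fun t α β hαβ => hcrit.gradV_eq_zero_of_ne hL hx hαβ t, ?_⟩
  rcases isEmpty_or_nonempty (Fin m) with hm | ⟨⟨α₀⟩⟩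
  · exact ⟨0, fun _ α => isEmptyElim α, fun _ α => isEmptyElim α⟩
  refine ⟨fun t => gradV (L α₀) α₀ (x t) (jet x t),
    fun t α => hcrit.gradV_self_eq hL hx α α₀ t, fun t α => ?_⟩
  have hp : (fun t => gradV (L α₀) α₀ (x t) (jet x t)) = fun t => gradV (L α) α (x t) (jet x t) :=
    funext fun t => hcrit.gradV_self_eq hL hx α₀ α t
  rw [pdv, hp]
  exact hcrit.fderiv_gradV_self hL hx α t
end
end

section
/- Suppose the multi-time Lagrangian 1-form is Legendre transformable, i.e., there exist smooth functions V_1, …, V_m : ℝ^N × ℝ^N → ℝ^N such that for all (x,p) ∈ ℝ^N × ℝ^N: ∂L_α/∂v_β(x, V_1(x,p), …, V_m(x,p)) = 0 for all α ≠ β, and ∂L_α/∂v_α(x, V_1(x,p), …, V_m(x,p)) = p for all α. Define the Hamilton functions H_α(x,p) = ⟨p, V_α(x,p)⟩ − L_α(x, V_1(x,p), …, V_m(x,p)). Let x, p : ℝ^m → ℝ^N be smooth functions satisfying the multi-time Euler–Lagrange equations, that is, x_{t_α} = V_α(x, p) and ∂p/∂t_α = ∂L_α/∂x(x, x_{t_1},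 …, x_{t_m}) for all α = 1, …, m. Then x and p satisfy the Hamiltonian equations of motion ∂x/∂t_α = ∂H_α/∂p(x,p) and ∂p/∂t_α = −∂H_α/∂x(x,p) for all α = 1, …, m. -/
noncomputable section

/-- Gradient `∂H/∂x` of a function `H(x,p)` on phase space, in the `x`-slot. -/
def gradQ {N : ℕ} (H : (Fin N → ℝ) → (Fin N → ℝ) → ℝ) (a b : Fin N → ℝ) : Fin N → ℝ :=
  fun j => fderiv ℝ (fun a' => H a' b) a (Pi.single j 1)

/-- Gradient `∂H/∂p` of a function `H(x,p)` on phase space, in the `p`-slot. -/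
def gradP {N : ℕ} (H : (Fin N → ℝ) → (Fin N → ℝ) → ℝ) (a b : Fin N → ℝ) : Fin N → ℝ :=
  fun j => fderiv ℝ (fun b' => H a b') b (Pi.single j 1)

/-- Canonical Poisson bracket `{F,G} = ⟨∂F/∂x, ∂G/∂p⟩ − ⟨∂F/∂p, ∂G/∂x⟩`. -/
def poisson {N : ℕ} (F G : (Fin N → ℝ) → (Fin N → ℝ) → ℝ) (a b : Fin N → ℝ) : ℝ :=
  ∑ j, (gradQ F a b j * gradP G a b j - gradP F a b j * gradQ G a b j)

/-!
At `v = V(x, p)` the Legendre conditions say that the derivative of `L_α` in the velocity slots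
is `w ↦ ⟨p, w_α⟩`. Differentiating `H_α = ⟨p, V_α⟩ - L_α(x, V)` by the chain rule, every term
containing a derivative of `V` therefore cancels (the envelope argument), which leaves
`∂H_α/∂p = V_α` and `∂H_α/∂x = -∂L_α/∂x` at `(x, p)`. The Euler–Lagrange equations then are
Hamilton's equations.
-/

open ContinuousLinearMap

section PartialDerivatives

variable {𝕜 E F G : Type*} [NontriviallyNormedField 𝕜] [NormedAddCommGroup E] [NormedSpace 𝕜 E]
  [NormedAddCommGroup F] [NormedSpace 𝕜 F] [NormedAddCommGroup G] [NormedSpace 𝕜 G] {a : E}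

theorem fderiv_curry_left_apply {f : E → F → G} {v : F}
    (hf : DifferentiableAt 𝕜 (fun q : E × F => f q.1 q.2) (a, v)) (u : E) :
    fderiv 𝕜 (fun a' => f a' v) a u = fderiv 𝕜 (fun q : E × F => f q.1 q.2) (a, v) (u, 0) :=
  congr($((hf.hasFDerivAt.comp (f := fun e => (e, v)) a (hasFDerivAt_prodMk_left a v)).fderiv) u)

theorem fderiv_curry_right_apply {f : E → F → G} {v : F}
    (hf : DifferentiableAt 𝕜 (fun q : E × F => f q.1 q.2) (a, v)) (u : F) :
    fderiv 𝕜 (fun v' => f a v') v u = fderiv 𝕜 (fun q : E × F => f q.1 q.2) (a, v) (0, u) :=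
  congr($((hf.hasFDerivAt.comp v (hasFDerivAt_prodMk_right a v)).fderiv) u)

theorem fderiv_curry_update_apply {ι : Type*} [Fintype ι] [DecidableEq ι]
    {f : E → (ι → F) → G} {v : ι → F}
    (hf : DifferentiableAt 𝕜 (fun q : E × (ι → F) => f q.1 q.2) (a, v)) (i : ι) (u : F) :
    fderiv 𝕜 (fun w => f a (Function.update v i w)) (v i) u
      = fderiv 𝕜 (fun q : E × (ι → F) => f q.1 q.2) (a, v)
          (0, Pi.single (M := fun _ => F) i u) := by
  set D := fderiv 𝕜 (fun q : E × (ι → F) => f q.1 q.2) (a, v)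
  have hf' : HasFDerivAt (fun q : E × (ι → F) => f q.1 q.2) D (a, Function.update v i (v i)) := by
    rw [Function.update_eq_self]
    exact hf.hasFDerivAt
  have h : HasFDerivAt (fun w => f a (Function.update v i w))
      (D.comp ((inr 𝕜 E (ι → F)).comp (.pi (Pi.single i (.id 𝕜 F))))) (v i) := by
    exact hf'.comp (v i) ((hasFDerivAt_prodMk_right a _).comp (v i) (hasFDerivAt_update v (v i)))
  rw [h.fderiv]
  have hsingle :
      (ContinuousLinearMap.pi (Pi.single i (.id 𝕜 F))) u = Pi.single (M := fun _ => F) i u := by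
    ext j
    rcases eq_or_ne j i with rfl | hji <;> simp [*]
  simp [hsingle]

end PartialDerivatives

theorem ContinuousLinearMap.apply_eq_dotProduct {R ι : Type*} [CommSemiring R] [TopologicalSpace R]
    [Fintype ι] [DecidableEq ι] (ℓ : (ι → R) →L[R] R) (u : ι → R) :
    ℓ u = (fun j => ℓ (Pi.single j 1)) ⬝ᵥ u := by
  conv_lhs => rw [pi_eq_sum_univ' u, map_sum]
  simp [dotProduct, mul_comm]

section DotProduct

variable {𝕜 E ι : Type*} [NontriviallyNormedField 𝕜] [NormedAddCommGroup E] [NormedSpace 𝕜 E]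
  [Fintype ι] {f g : E → ι → 𝕜} {z : E}

theorem DifferentiableAt.dotProduct (hf : DifferentiableAt 𝕜 f z) (hg : DifferentiableAt 𝕜 g z) :
    DifferentiableAt 𝕜 (fun y => f y ⬝ᵥ g y) z := by
  unfold _root_.dotProduct
  fun_prop

theorem fderiv_dotProduct_apply (hf : DifferentiableAt 𝕜 f z) (hg : DifferentiableAt 𝕜 g z)
    (u : E) :
    fderiv 𝕜 (fun y => f y ⬝ᵥ g y) z u = fderiv 𝕜 f z u ⬝ᵥ g z + f z ⬝ᵥ fderiv 𝕜 g z u := by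
  have hsum : HasFDerivAt (fun y => ∑ i, f y i * g y i)
      (∑ i, (f z i • (proj i).comp (fderiv 𝕜 g z) + g z i • (proj i).comp (fderiv 𝕜 f z))) z :=
    HasFDerivAt.fun_sum fun i _ =>
      (hasFDerivAt_pi'.1 hf.hasFDerivAt i).mul (hasFDerivAt_pi'.1 hg.hasFDerivAt i)
  rw [show (fun y => f y ⬝ᵥ g y) = fun y => ∑ i, f y i * g y i from rfl, hsum.fderiv]
  simp [dotProduct, Finset.sum_add_distrib, mul_comm, add_comm]

end DotProduct

section Legendre

variable {m N : ℕ} {L : (Fin N → ℝ) → (Fin m → Fin N → ℝ) → ℝ} {a : Fin N → ℝ}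

theorem fderiv_apply_inr_eq_sum_gradV {v : Fin m → Fin N → ℝ}
    (hL : DifferentiableAt ℝ (fun q : (Fin N → ℝ) × (Fin m → Fin N → ℝ) => L q.1 q.2) (a, v))
    (w : Fin m → Fin N → ℝ) :
    fderiv ℝ (fun q : (Fin N → ℝ) × (Fin m → Fin N → ℝ) => L q.1 q.2) (a, v) (0, w)
      = ∑ β, gradV L β a v ⬝ᵥ w β := by
  set DL := fderiv ℝ (fun q : (Fin N → ℝ) × (Fin m → Fin N → ℝ) => L q.1 q.2) (a, v)
  calc DL (0, w) = (DL.comp (inr ℝ _ _)) (∑ β, Pi.single β (w β)) := by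
        rw [Finset.univ_sum_single]; rfl
    _ = ∑ β, DL (0, Pi.single β (w β)) := map_sum _ _ _
    _ = ∑ β, gradV L β a v ⬝ᵥ w β := by
        refine Finset.sum_congr rfl fun β _ => ?_
        rw [← fderiv_curry_update_apply hL, ContinuousLinearMap.apply_eq_dotProduct]
        rfl

theorem fderiv_apply_inr_of_gradV {v : Fin m → Fin N → ℝ} {α : Fin m} {b : Fin N → ℝ}
    (hL : DifferentiableAt ℝ (fun q : (Fin N → ℝ) × (Fin m → Fin N → ℝ) => L q.1 q.2) (a, v))
    (hne : ∀ β, β ≠ α → gradV L β a v = 0) (heq : gradV L α a v = b)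
    (w : Fin m → Fin N → ℝ) :
    fderiv ℝ (fun q : (Fin N → ℝ) × (Fin m → Fin N → ℝ) => L q.1 q.2) (a, v) (0, w)
      = b ⬝ᵥ w α := by
  rw [fderiv_apply_inr_eq_sum_gradV hL, Finset.sum_eq_single α, heq]
  · intro β _ hβ
    rw [hne β hβ, zero_dotProduct]
  · simp

end Legendre

def hamiltonian {m N : ℕ} (L : (Fin N → ℝ) → (Fin m → Fin N → ℝ) → ℝ)
    (V : Fin m → (Fin N → ℝ) → (Fin N → ℝ) → Fin N → ℝ) (α : Fin m) (a b : Fin N → ℝ) : ℝ :=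
  b ⬝ᵥ V α a b - L a (fun γ => V γ a b)

section Hamiltonian

variable {m N : ℕ} {L : (Fin N → ℝ) → (Fin m → Fin N → ℝ) → ℝ}
  {V : Fin m → (Fin N → ℝ) → (Fin N → ℝ) → Fin N → ℝ} {α : Fin m} {a b : Fin N → ℝ}

theorem differentiableAt_hamiltonian
    (hL : DifferentiableAt ℝ (fun q : (Fin N → ℝ) × (Fin m → Fin N → ℝ) => L q.1 q.2)
      (a, fun γ => V γ a b))
    (hV : ∀ γ, DifferentiableAt ℝ (fun z : (Fin N → ℝ) × (Fin N → ℝ) => V γ z.1 z.2) (a, b)) :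
    DifferentiableAt ℝ (fun z : (Fin N → ℝ) × (Fin N → ℝ) => hamiltonian L V α z.1 z.2)
      (a, b) := by
  have hLV := hL.comp (a, b) (differentiableAt_fst.prodMk (differentiableAt_pi.2 hV))
  exact (differentiableAt_snd.dotProduct (hV α)).sub hLV

theorem fderiv_hamiltonian_apply
    (hL : DifferentiableAt ℝ (fun q : (Fin N → ℝ) × (Fin m → Fin N → ℝ) => L q.1 q.2)
      (a, fun γ => V γ a b))
    (hV : ∀ γ, DifferentiableAt ℝ (fun z : (Fin N → ℝ) × (Fin N → ℝ) => V γ z.1 z.2) (a, b))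
    (hLeg : ∀ w, fderiv ℝ (fun q : (Fin N → ℝ) × (Fin m → Fin N → ℝ) => L q.1 q.2)
      (a, fun γ => V γ a b) (0, w) = b ⬝ᵥ w α)
    (u e : Fin N → ℝ) :
    fderiv ℝ (fun z : (Fin N → ℝ) × (Fin N → ℝ) => hamiltonian L V α z.1 z.2) (a, b) (u, e)
      = e ⬝ᵥ V α a b - fderiv ℝ (fun q : (Fin N → ℝ) × (Fin m → Fin N → ℝ) => L q.1 q.2)
          (a, fun γ => V γ a b) (u, 0) := by
  set Λ := fun q : (Fin N → ℝ) × (Fin m → Fin N → ℝ) => L q.1 q.2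
  set Vz := fun z : (Fin N → ℝ) × (Fin N → ℝ) => fun γ => V γ z.1 z.2
  have hVz : HasFDerivAt Vz (fderiv ℝ Vz (a, b)) (a, b) := (differentiableAt_pi.2 hV).hasFDerivAt
  have hLV : HasFDerivAt (fun z => Λ (z.1, Vz z))
      ((fderiv ℝ Λ (a, Vz (a, b))).comp ((fst ℝ _ _).prod (fderiv ℝ Vz (a, b)))) (a, b) := by
    exact hL.hasFDerivAt.comp (a, b) (hasFDerivAt_fst.prodMk hVz)
  have hpairing := differentiableAt_snd.dotProduct (hV α)
  have hVα : fderiv ℝ Vz (a, b) (u, e) α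
      = fderiv ℝ (fun z : (Fin N → ℝ) × (Fin N → ℝ) => V α z.1 z.2) (a, b) (u, e) := by
    rw [fderiv_pi hV]
    rfl
  have hsplit : fderiv ℝ Λ (a, Vz (a, b)) (u, fderiv ℝ Vz (a, b) (u, e))
      = fderiv ℝ Λ (a, Vz (a, b)) (u, 0)
        + fderiv ℝ Λ (a, Vz (a, b)) (0, fderiv ℝ Vz (a, b) (u, e)) := by
    rw [← map_add, Prod.mk_add_mk, add_zero, zero_add]
  show fderiv ℝ (fun z => z.2 ⬝ᵥ V α z.1 z.2 - Λ (z.1, Vz z)) (a, b) (u, e) = _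
  rw [fderiv_fun_sub hpairing hLV.differentiableAt, sub_apply,
    fderiv_dotProduct_apply differentiableAt_snd (hV α), hLV.fderiv, comp_apply, prod_apply,
    coe_fst', hsplit, hLeg, hVα, fderiv_snd, coe_snd']
  ring

theorem gradP_hamiltonian
    (hL : DifferentiableAt ℝ (fun q : (Fin N → ℝ) × (Fin m → Fin N → ℝ) => L q.1 q.2)
      (a, fun γ => V γ a b))
    (hV : ∀ γ, DifferentiableAt ℝ (fun z : (Fin N → ℝ) × (Fin N → ℝ) => V γ z.1 z.2) (a, b))
    (hLeg : ∀ w, fderiv ℝ (fun q : (Fin N → ℝ) × (Fin m → Fin N → ℝ) => L q.1 q.2)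
      (a, fun γ => V γ a b) (0, w) = b ⬝ᵥ w α) :
    gradP (hamiltonian L V α) a b = V α a b := by
  ext j
  rw [gradP, fderiv_curry_right_apply (differentiableAt_hamiltonian hL hV),
    fderiv_hamiltonian_apply hL hV hLeg, Prod.mk_zero_zero, map_zero]
  simp

theorem gradQ_hamiltonian
    (hL : DifferentiableAt ℝ (fun q : (Fin N → ℝ) × (Fin m → Fin N → ℝ) => L q.1 q.2)
      (a, fun γ => V γ a b))
    (hV : ∀ γ, DifferentiableAt ℝ (fun z : (Fin N → ℝ) × (Fin N → ℝ) => V γ z.1 z.2) (a, b))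
    (hLeg : ∀ w, fderiv ℝ (fun q : (Fin N → ℝ) × (Fin m → Fin N → ℝ) => L q.1 q.2)
      (a, fun γ => V γ a b) (0, w) = b ⬝ᵥ w α) :
    gradQ (hamiltonian L V α) a b = -gradX L a (fun γ => V γ a b) := by
  ext j
  rw [gradQ, Pi.neg_apply, gradX, fderiv_curry_left_apply hL,
    fderiv_curry_left_apply (differentiableAt_hamiltonian hL hV),
    fderiv_hamiltonian_apply hL hV hLeg]
  simp

end Hamiltonian

theorem hamiltonian_of_EL_general {m N : ℕ}
    (L : Fin m → (Fin N → ℝ) → (Fin m → (Fin N → ℝ)) → ℝ)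
    (hL : ∀ α, ContDiff ℝ (⊤ : ℕ∞)
      (fun q : (Fin N → ℝ) × (Fin m → (Fin N → ℝ)) => L α q.1 q.2))
    (V : Fin m → (Fin N → ℝ) → (Fin N → ℝ) → (Fin N → ℝ))
    (hV : ∀ α, ContDiff ℝ (⊤ : ℕ∞)
      (fun q : (Fin N → ℝ) × (Fin N → ℝ) => V α q.1 q.2))
    (hLeg1 : ∀ (a b : Fin N → ℝ) (α β : Fin m), α ≠ β →
      gradV (L α) β a (fun γ => V γ a b) = 0)
    (hLeg2 : ∀ (a b : Fin N → ℝ) (α : Fin m),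
      gradV (L α) α a (fun γ => V γ a b) = b)
    (H : Fin m → (Fin N → ℝ) → (Fin N → ℝ) → ℝ)
    (hH : ∀ (α : Fin m) (a b : Fin N → ℝ),
      H α a b = (∑ j, b j * V α a b j) - L α a (fun γ => V γ a b))
    (x p : (Fin m → ℝ) → (Fin N → ℝ))
    (hEL1 : ∀ (t : Fin m → ℝ) (α : Fin m), pdv x α t = V α (x t) (p t))
    (hEL2 : ∀ (t : Fin m → ℝ) (α : Fin m), pdv p α t = gradX (L α) (x t) (jet x t)) :
    ∀ (t : Fin m → ℝ) (α : Fin m),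
      pdv x α t = gradP (H α) (x t) (p t) ∧
      pdv p α t = -gradQ (H α) (x t) (p t) := by
  intro t α
  have hLα := (hL α).differentiable (by simp) (x t, fun γ => V γ (x t) (p t))
  have hVt γ := (hV γ).differentiable (by simp) (x t, p t)
  have hLeg : ∀ w, fderiv ℝ (fun q : (Fin N → ℝ) × (Fin m → Fin N → ℝ) => L α q.1 q.2)
      (x t, fun γ => V γ (x t) (p t)) (0, w) = p t ⬝ᵥ w α :=
    fderiv_apply_inr_of_gradV hLα (fun β hβ => hLeg1 _ _ α β hβ.symm) (hLeg2 _ _ α)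
  have hHα : H α = hamiltonian (L α) V α := funext₂ (hH α)
  have hjet : jet x t = fun γ => V γ (x t) (p t) := funext (hEL1 t)
  rw [hEL1, hEL2, hjet, hHα, gradP_hamiltonian hLα hVt hLeg, gradQ_hamiltonian hLα hVt hLeg,
    neg_neg]
  exact ⟨rfl, rfl⟩

/-- If the multi-time Lagrangian 1-form is Legendre transformable, with
solving functions `V_α` and Hamilton functions `H_α(x,p) = ⟨p, V_α(x,p)⟩ − L_α(x, V(x,p))`,
then every solution `(x,p)` of the multi-time Euler–Lagrange equations satisfies the
Hamiltonian equations of motion. -/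
theorem hamiltonian_of_EL {m N : ℕ}
    (L : Fin m → (Fin N → ℝ) → (Fin m → (Fin N → ℝ)) → ℝ)
    (hL : ∀ α, ContDiff ℝ (⊤ : ℕ∞)
      (fun q : (Fin N → ℝ) × (Fin m → (Fin N → ℝ)) => L α q.1 q.2))
    (V : Fin m → (Fin N → ℝ) → (Fin N → ℝ) → (Fin N → ℝ))
    (hV : ∀ α, ContDiff ℝ (⊤ : ℕ∞)
      (fun q : (Fin N → ℝ) × (Fin N → ℝ) => V α q.1 q.2))
    (hLeg1 : ∀ (a b : Fin N → ℝ) (α β : Fin m), α ≠ β →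
      gradV (L α) β a (fun γ => V γ a b) = 0)
    (hLeg2 : ∀ (a b : Fin N → ℝ) (α : Fin m),
      gradV (L α) α a (fun γ => V γ a b) = b)
    (H : Fin m → (Fin N → ℝ) → (Fin N → ℝ) → ℝ)
    (hH : ∀ (α : Fin m) (a b : Fin N → ℝ),
      H α a b = (∑ j, b j * V α a b j) - L α a (fun γ => V γ a b))
    (x p : (Fin m → ℝ) → (Fin N → ℝ))
    (hx : ContDiff ℝ (⊤ : ℕ∞) x) (hp : ContDiff ℝ (⊤ : ℕ∞) p)
    (hEL1 : ∀ (t : Fin m → ℝ) (α : Fin m), pdv x α t = V α (x t) (p t))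
    (hEL2 : ∀ (t : Fin m → ℝ) (α : Fin m), pdv p α t = gradX (L α) (x t) (jet x t)) :
    ∀ (t : Fin m → ℝ) (α : Fin m),
      pdv x α t = gradP (H α) (x t) (p t) ∧
      pdv p α t = -gradQ (H α) (x t) (p t) :=
  hamiltonian_of_EL_general L hL V hV hLeg1 hLeg2 H hH x p hEL1 hEL2
end
end

section
/- Let H_1, …, H_m : ℝ^N × ℝ^N → ℝ be smooth functions. Suppose that for every point (x_0, p_0) ∈ ℝ^N × ℝ^N there exist smooth functions x, p : ℝ^m → ℝ^N with (x(0), p(0)) = (x_0, p_0) satisfying simultaneously all Hamiltonian equations ∂x/∂t_α = ∂H_α/∂p(x,p) and ∂p/∂t_α = −∂H_α/∂x(x,p) for α = 1, …, m. Then for every pair α, β the Poisson bracket {H_α, H_β} is a constant function on ℝ^N × ℝ^N. -/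
noncomputable section

/-! A common solution `t ↦ (x t, p t)` of the `m` Hamiltonian systems is an integral map of the
Hamiltonian vector fields `X_α`, so the symmetry of its mixed second partials forces the Lie
bracket `[X_α, X_β]` to vanish at its starting point, that is, everywhere. The classical identity
`X_{{A, B}} = -[X_A, X_B]` and the injectivity of `dF ↦ X_F` then give `d{H_α, H_β} = 0`. -/

open Function VectorField

section

variable {T E : Type*} [NormedAddCommGroup T] [NormedSpace ℝ T] [NormedAddCommGroup E]
  [NormedSpace ℝ E]

theorem fderiv_apply_fderiv_eq_of_fderiv_apply_eq {f : T → E} {t : T} (hf : ContDiffAt ℝ 2 f t)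
    {U : E → E} (hU : DifferentiableAt ℝ U (f t)) {u : T} (hfu : ∀ s, fderiv ℝ f s u = U (f s))
    (z : T) : fderiv ℝ U (f t) (fderiv ℝ f t z) = fderiv ℝ (fderiv ℝ f) t z u := by
  have hUf : HasFDerivAt (fun s => U (f s)) ((fderiv ℝ U (f t)).comp (fderiv ℝ f t)) t :=
    hU.hasFDerivAt.comp t ((hf.differentiableAt two_ne_zero).hasFDerivAt)
  have hDfu : HasFDerivAt (fun s => fderiv ℝ f s u)
      ((ContinuousLinearMap.apply ℝ E u).comp (fderiv ℝ (fderiv ℝ f) t)) t :=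
    (ContinuousLinearMap.apply ℝ E u).hasFDerivAt.comp t
      ((hf.fderiv_right (m := 1) le_rfl).differentiableAt one_ne_zero).hasFDerivAt
  simp only [hfu] at hDfu
  exact congr($(hUf.unique hDfu) z)

theorem lieBracket_eq_zero_of_fderiv_apply_eq {f : T → E} {t : T} (hf : ContDiffAt ℝ 2 f t)
    {V W : E → E} (hV : DifferentiableAt ℝ V (f t)) (hW : DifferentiableAt ℝ W (f t)) {v w : T}
    (hfv : ∀ s, fderiv ℝ f s v = V (f s)) (hfw : ∀ s, fderiv ℝ f s w = W (f s)) :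
    lieBracket ℝ V W (f t) = 0 := by
  rw [lieBracket, ← hfv, ← hfw, fderiv_apply_fderiv_eq_of_fderiv_apply_eq hf hW hfw,
    fderiv_apply_fderiv_eq_of_fderiv_apply_eq hf hV hfv,
    (hf.isSymmSndFDerivAt (by simp)).eq, sub_self]

end

abbrev PhaseSpace (ι : Type*) := (ι → ℝ) × (ι → ℝ)

namespace PhaseSpace

variable {ι : Type*} [Fintype ι] [DecidableEq ι]

theorem clm_apply_eq_sum (L : PhaseSpace ι →L[ℝ] ℝ) (w : PhaseSpace ι) :
    L w = ∑ j, (w.1 j * L (Pi.single j 1, 0) + w.2 j * L (0, Pi.single j 1)) := by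
  rw [← L.comp_inl_add_comp_inr, Finset.sum_add_distrib]
  conv_lhs => rw [pi_eq_sum_univ' w.1, pi_eq_sum_univ' w.2]
  simp [map_sum, map_smul]

def symplecticGradient : (PhaseSpace ι →L[ℝ] ℝ) →L[ℝ] PhaseSpace ι :=
  (ContinuousLinearMap.pi fun j => ContinuousLinearMap.apply ℝ ℝ (0, Pi.single j 1)).prod
    (-ContinuousLinearMap.pi fun j => ContinuousLinearMap.apply ℝ ℝ (Pi.single j 1, 0))

theorem symplecticGradient_apply (L : PhaseSpace ι →L[ℝ] ℝ) :
    symplecticGradient L = (fun j => L (0, Pi.single j 1), fun j => -L (Pi.single j 1, 0)) :=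
  rfl

theorem apply_symplecticGradient (L M : PhaseSpace ι →L[ℝ] ℝ) :
    L (symplecticGradient M) =
      ∑ j, (L (Pi.single j 1, 0) * M (0, Pi.single j 1) -
        L (0, Pi.single j 1) * M (Pi.single j 1, 0)) := by
  rw [clm_apply_eq_sum, symplecticGradient_apply]
  congr! 1 with j
  ring

theorem apply_symplecticGradient_swap (L M : PhaseSpace ι →L[ℝ] ℝ) :
    M (symplecticGradient L) = -L (symplecticGradient M) := by
  simp only [apply_symplecticGradient, ← Finset.sum_neg_distrib]
  congr! 1 with j
  ring

theorem symplecticGradient_injective :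
    Function.Injective (symplecticGradient : (PhaseSpace ι →L[ℝ] ℝ) → PhaseSpace ι) := by
  intro L M h
  simp only [symplecticGradient_apply, Prod.mk.injEq, funext_iff, neg_inj] at h
  refine ContinuousLinearMap.ext fun w => ?_
  rw [clm_apply_eq_sum, clm_apply_eq_sum]
  simp only [h.1, h.2]

def hamiltonianVectorField (A : PhaseSpace ι → ℝ) (q : PhaseSpace ι) : PhaseSpace ι :=
  symplecticGradient (fderiv ℝ A q)

def poissonBracket (A B : PhaseSpace ι → ℝ) (q : PhaseSpace ι) : ℝ :=
  fderiv ℝ A q (hamiltonianVectorField B q)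

variable {A B : PhaseSpace ι → ℝ} {q : PhaseSpace ι}

theorem hasFDerivAt_hamiltonianVectorField (hA : ContDiffAt ℝ 2 A q) :
    HasFDerivAt (hamiltonianVectorField A) (symplecticGradient.comp (fderiv ℝ (fderiv ℝ A) q)) q :=
  symplecticGradient.hasFDerivAt.comp q
    ((hA.fderiv_right (m := 1) le_rfl).differentiableAt one_ne_zero).hasFDerivAt

theorem hasFDerivAt_poissonBracket (hA : ContDiffAt ℝ 2 A q) (hB : ContDiffAt ℝ 2 B q) :
    HasFDerivAt (poissonBracket A B)
      (fderiv ℝ (fderiv ℝ A) q (hamiltonianVectorField B q) -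
        fderiv ℝ (fderiv ℝ B) q (hamiltonianVectorField A q)) q := by
  have hDA := ((hA.fderiv_right (m := 1) le_rfl).differentiableAt one_ne_zero).hasFDerivAt
  have hsA := hA.isSymmSndFDerivAt (by simp)
  have hsB := hB.isSymmSndFDerivAt (by simp)
  refine (hDA.clm_apply (hasFDerivAt_hamiltonianVectorField hB)).congr_fderiv ?_
  refine ContinuousLinearMap.ext fun v => ?_
  simp only [add_apply, ContinuousLinearMap.comp_apply,
    ContinuousLinearMap.flip_apply, sub_apply]
  rw [apply_symplecticGradient_swap, hamiltonianVectorField, hamiltonianVectorField, hsA.eq,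
    hsB.eq]
  ring

theorem hamiltonianVectorField_poissonBracket (hA : ContDiffAt ℝ 2 A q) (hB : ContDiffAt ℝ 2 B q) :
    hamiltonianVectorField (poissonBracket A B) q =
      -lieBracket ℝ (hamiltonianVectorField A) (hamiltonianVectorField B) q := by
  rw [lieBracket, (hasFDerivAt_hamiltonianVectorField hA).fderiv,
    (hasFDerivAt_hamiltonianVectorField hB).fderiv, hamiltonianVectorField,
    (hasFDerivAt_poissonBracket hA hB).fderiv]
  simp only [ContinuousLinearMap.comp_apply, map_sub]
  abel

theorem poissonBracket_eq_of_lieBracket_eq_zero (hA : ContDiff ℝ 2 A) (hB : ContDiff ℝ 2 B)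
    (hcomm : ∀ q, lieBracket ℝ (hamiltonianVectorField A) (hamiltonianVectorField B) q = 0)
    (q q' : PhaseSpace ι) : poissonBracket A B q = poissonBracket A B q' := by
  have hD q := hasFDerivAt_poissonBracket (q := q) hA.contDiffAt hB.contDiffAt
  refine is_const_of_fderiv_eq_zero (fun q => (hD q).differentiableAt) (fun q => ?_) q q'
  apply symplecticGradient_injective
  rw [map_zero, ← hamiltonianVectorField,
    hamiltonianVectorField_poissonBracket hA.contDiffAt hB.contDiffAt, hcomm, neg_zero]

end PhaseSpace

section

variable {N : ℕ} {H : (Fin N → ℝ) → (Fin N → ℝ) → ℝ} {a b : Fin N → ℝ}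

theorem gradQ_apply (h : DifferentiableAt ℝ (uncurry H) (a, b)) (j : Fin N) :
    gradQ H a b j = fderiv ℝ (uncurry H) (a, b) (Pi.single j 1, 0) := by
  have hslice : HasFDerivAt (fun a' => H a' b)
      ((fderiv ℝ (uncurry H) (a, b)).comp (.inl ℝ _ _)) a :=
    (h.hasFDerivAt.comp a (hasFDerivAt_prodMk_left (𝕜 := ℝ) a b) :)
  rw [gradQ, hslice.fderiv]
  rfl

theorem gradP_apply (h : DifferentiableAt ℝ (uncurry H) (a, b)) (j : Fin N) :
    gradP H a b j = fderiv ℝ (uncurry H) (a, b) (0, Pi.single j 1) := by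
  have hslice : HasFDerivAt (fun b' => H a b')
      ((fderiv ℝ (uncurry H) (a, b)).comp (.inr ℝ _ _)) b :=
    (h.hasFDerivAt.comp b (hasFDerivAt_prodMk_right (𝕜 := ℝ) a b) :)
  rw [gradP, hslice.fderiv]
  rfl

theorem hamiltonianVectorField_uncurry (h : DifferentiableAt ℝ (uncurry H) (a, b)) :
    PhaseSpace.hamiltonianVectorField (uncurry H) (a, b) = (gradP H a b, -gradQ H a b) := by
  ext j <;> simp [PhaseSpace.hamiltonianVectorField, PhaseSpace.symplecticGradient_apply,
    gradQ_apply h, gradP_apply h]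

theorem poisson_eq_poissonBracket {G : (Fin N → ℝ) → (Fin N → ℝ) → ℝ}
    (hH : DifferentiableAt ℝ (uncurry H) (a, b)) (hG : DifferentiableAt ℝ (uncurry G) (a, b)) :
    poisson H G a b = PhaseSpace.poissonBracket (uncurry H) (uncurry G) (a, b) := by
  simp only [poisson, PhaseSpace.poissonBracket, PhaseSpace.hamiltonianVectorField,
    PhaseSpace.apply_symplecticGradient, gradQ_apply hH, gradP_apply hH, gradQ_apply hG,
    gradP_apply hG]

end

/-- If for every initial point there exist smooth common solutions of all
`m` Hamiltonian flows with Hamilton functions `H_α`, then all pairwise Poisson brackets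
`{H_α, H_β}` are constant functions on phase space. -/
theorem poisson_const_of_commuting_flows {m N : ℕ}
    (H : Fin m → (Fin N → ℝ) → (Fin N → ℝ) → ℝ)
    (hH : ∀ α, ContDiff ℝ (⊤ : ℕ∞)
      (fun q : (Fin N → ℝ) × (Fin N → ℝ) => H α q.1 q.2))
    (hflows : ∀ x₀ p₀ : Fin N → ℝ, ∃ x p : (Fin m → ℝ) → (Fin N → ℝ),
      ContDiff ℝ (⊤ : ℕ∞) x ∧ ContDiff ℝ (⊤ : ℕ∞) p ∧
      x 0 = x₀ ∧ p 0 = p₀ ∧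
      ∀ (t : Fin m → ℝ) (α : Fin m),
        pdv x α t = gradP (H α) (x t) (p t) ∧
        pdv p α t = -gradQ (H α) (x t) (p t)) :
    ∀ α β : Fin m, ∃ c : ℝ, ∀ a b : Fin N → ℝ, poisson (H α) (H β) a b = c := by
  intro α β
  have hH₂ γ : ContDiff ℝ 2 (uncurry (H γ)) := (hH γ).of_le (WithTop.coe_le_coe.2 le_top)
  have hcomm : ∀ q, lieBracket ℝ (PhaseSpace.hamiltonianVectorField (uncurry (H α)))
      (PhaseSpace.hamiltonianVectorField (uncurry (H β))) q = 0 := by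
    rintro ⟨x₀, p₀⟩
    obtain ⟨x, p, hx, hp, rfl, rfl, hham⟩ := hflows x₀ p₀
    have hflow γ t : fderiv ℝ (fun t => (x t, p t)) t (Pi.single γ 1) =
        PhaseSpace.hamiltonianVectorField (uncurry (H γ)) (x t, p t) := by
      rw [hamiltonianVectorField_uncurry ((hH₂ γ).differentiable two_ne_zero _),
        DifferentiableAt.fderiv_prodMk (hx.differentiable (by simp) t)
          (hp.differentiable (by simp) t)]
      exact Prod.ext (hham t γ).1 (hham t γ).2
    have hdiff γ := (PhaseSpace.hasFDerivAt_hamiltonianVectorField (q := (x 0, p 0))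
      (hH₂ γ).contDiffAt).differentiableAt
    exact lieBracket_eq_zero_of_fderiv_apply_eq (t := 0)
      ((hx.prodMk hp).contDiffAt.of_le (WithTop.coe_le_coe.2 le_top)) (hdiff α) (hdiff β)
      (hflow α) (hflow β)
  refine ⟨PhaseSpace.poissonBracket (uncurry (H α)) (uncurry (H β)) 0, fun a b => ?_⟩
  rw [poisson_eq_poissonBracket ((hH₂ α).differentiable two_ne_zero _)
    ((hH₂ β).differentiable two_ne_zero _)]
  exact PhaseSpace.poissonBracket_eq_of_lieBracket_eq_zero (hH₂ α) (hH₂ β) hcomm _ _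
end
end

section
/- Let H_1, …, H_m : ℝ^N × ℝ^N → ℝ be smooth, and suppose there is a smooth map P : ℝ^N × ℝ^N → ℝ^N inverting the first Legendre transformation: ∂H_1/∂p(x, P(x,v)) = v for all (x,v), and P(x, ∂H_1/∂p(x,p)) = p for all (x,p). Define L_1(x, v_1) = ⟨P(x,v_1), v_1⟩ − H_1(x, P(x,v_1)) and, for α = 2, …, m, L_α(x, v_1, v_α) = ⟨P(x,v_1), v_α⟩ − H_α(x, P(x,v_1)) (so L_α depends only on x, v_1, v_α). Then for any smooth functions x, p : ℝ^m → ℝ^N satisfying simultaneously all Hamiltonian equations ∂x/∂t_α = ∂H_α/∂p(x,p), ∂p/∂t_α = −∂H_α/∂x(x,p) (α = 1, …, m), the function x satisfies the multi-time Euler–Lagrange equations of this Lagrangian 1-form: ∂L_α/∂v_β(x, x_{t_1}, …, x_{t_m}) = 0 for all α ≠ β, the derivatives ∂L_α/∂v_α(x, x_{t_1}, …, x_{t_m}) all coincide and equal p, and ∂p/∂t_α = ∂L_α/∂x(x, x_{t_1}, …, x_{t_m}) for all α. -/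
noncomputable section

/-! Write `L_α(a, W) = Φ_α(a, P(a, W₁), W)` with `Φ_α(a, u, W) = ⟨u, W_α⟩ − H_α(a, u)`. Along a common
solution, `P(x, x_{t_1}) = p` and `x_{t_α} = ∂H_α/∂p(x, p)`, so `u ↦ Φ_α(x, u, W)` is stationary at
`u = p`. By the envelope principle every first derivative of `L_α` is then the corresponding
derivative of `Φ_α` at the frozen value `u = p`: in `v_β` it is `p` if `β = α` and `0` otherwise,
and in `x` it is `−∂H_α/∂x(x, p) = p_{t_α}`. -/

open Function

section Envelope

variable {𝕜 E U F : Type*} [NontriviallyNormedField 𝕜]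
  [NormedAddCommGroup E] [NormedSpace 𝕜 E] [NormedAddCommGroup U] [NormedSpace 𝕜 U]
  [NormedAddCommGroup F] [NormedSpace 𝕜 F]

theorem fderiv_comp_eq_fderiv_fst_of_fderiv_snd_eq_zero {Φ : E → U → F} {g : E → U} {e : E}
    (hΦ : DifferentiableAt 𝕜 (uncurry Φ) (e, g e)) (hg : DifferentiableAt 𝕜 g e)
    (h0 : fderiv 𝕜 (Φ e) (g e) = 0) :
    fderiv 𝕜 (fun x => Φ x (g x)) e = fderiv 𝕜 (fun x => Φ x (g e)) e := by
  set D := fderiv 𝕜 (uncurry Φ) (e, g e)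
  have hD : HasFDerivAt (uncurry Φ) D (e, g e) := hΦ.hasFDerivAt
  have hcomp : HasFDerivAt (fun x => Φ x (g x))
      (D.comp ((ContinuousLinearMap.id 𝕜 E).prod (fderiv 𝕜 g e))) e :=
    hD.comp (f := fun x => (x, g x)) e ((hasFDerivAt_id e).prodMk hg.hasFDerivAt)
  have hfst : HasFDerivAt (fun x => Φ x (g e)) (D.comp (.inl 𝕜 E U)) e :=
    hD.comp (f := fun x => (x, g e)) e ((hasFDerivAt_id e).prodMk (hasFDerivAt_const _ _))
  have hsnd : HasFDerivAt (Φ e) (D.comp (.inr 𝕜 E U)) (g e) :=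
    hD.comp (f := fun u => (e, u)) (g e) ((hasFDerivAt_const _ _).prodMk (hasFDerivAt_id _))
  rw [hsnd.fderiv] at h0
  rw [hcomp.fderiv, hfst.fderiv]
  ext v
  have hsplit : (v, fderiv 𝕜 g e v) = ((v, 0) : E × U) + (0, fderiv 𝕜 g e v) := by simp
  simpa [hsplit, -Prod.mk_add_mk] using congr($h0 (fderiv 𝕜 g e v))

end Envelope

section DotProduct

variable {N : ℕ}

theorem ContinuousLinearMap.apply_eq_dotProduct_s6 (φ : (Fin N → ℝ) →L[ℝ] ℝ) (u : Fin N → ℝ) :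
    φ u = u ⬝ᵥ fun j => φ (Pi.single j 1) := by
  conv_lhs => rw [pi_eq_sum_univ' u]
  simp [map_sum, dotProduct]

theorem fderiv_dotProduct_apply_single (b x : Fin N → ℝ) (j : Fin N) :
    fderiv ℝ (b ⬝ᵥ ·) x (Pi.single j 1) = b j := by
  have h : HasFDerivAt (b ⬝ᵥ ·)
      (∑ i, b i • ContinuousLinearMap.proj (R := ℝ) (φ := fun _ : Fin N => ℝ) i) x := by
    convert (∑ i, b i • ContinuousLinearMap.proj (R := ℝ) (φ := fun _ : Fin N => ℝ) i).hasFDerivAt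
      using 1
    ext w
    simp [dotProduct]
  simp [h.fderiv, Pi.single_apply]

theorem fderiv_dotProduct_gradient_sub_eq_zero {h : (Fin N → ℝ) → ℝ} {b : Fin N → ℝ}
    (hh : DifferentiableAt ℝ h b) :
    fderiv ℝ (fun u => u ⬝ᵥ (fun j => fderiv ℝ h b (Pi.single j 1)) - h u) b = 0 := by
  simp_rw [← ContinuousLinearMap.apply_eq_dotProduct_s6]
  rw [fderiv_fun_sub (fderiv ℝ h b).differentiableAt hh, ContinuousLinearMap.fderiv, sub_self]

end DotProduct

section HamiltonianLagrangian

variable {m N : ℕ}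

def hamiltonianLagrangian (H : (Fin N → ℝ) → (Fin N → ℝ) → ℝ)
    (P : (Fin N → ℝ) → (Fin N → ℝ) → Fin N → ℝ) (i₀ α : Fin m)
    (a : Fin N → ℝ) (W : Fin m → Fin N → ℝ) : ℝ :=
  P a (W i₀) ⬝ᵥ W α - H a (P a (W i₀))

variable {H : (Fin N → ℝ) → (Fin N → ℝ) → ℝ} {P : (Fin N → ℝ) → (Fin N → ℝ) → Fin N → ℝ}
  {i₀ α : Fin m} {a : Fin N → ℝ} {W : Fin m → Fin N → ℝ}

theorem gradV_hamiltonianLagrangian (hH : DifferentiableAt ℝ (H a) (P a (W i₀)))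
    (hP : DifferentiableAt ℝ (P a) (W i₀)) (hW : W α = gradP H a (P a (W i₀))) (β : Fin m) :
    gradV (hamiltonianLagrangian H P i₀ α) β a W = if β = α then P a (W i₀) else 0 := by
  have hupd : Differentiable ℝ (update W β) := fun w => (hasFDerivAt_update W w).differentiableAt
  have henv := fderiv_comp_eq_fderiv_fst_of_fderiv_snd_eq_zero (𝕜 := ℝ)
    (Φ := fun w u => u ⬝ᵥ update W β w α - H a u) (g := fun w => P a (update W β w i₀))
    (e := W β) ?_ ?_ ?_
  · funext j
    change fderiv ℝ (fun w => P a (update W β w i₀) ⬝ᵥ update W β w α -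
      H a (P a (update W β w i₀))) (W β) (Pi.single j 1) = _
    rw [henv]
    simp only [update_eq_self, fderiv_sub_const]
    split_ifs with hβ
    · subst hβ
      simp only [update_self]
      exact fderiv_dotProduct_apply_single _ _ _
    · simp [update_of_ne (Ne.symm hβ)]
  · simp only [update_eq_self]
    unfold dotProduct
    fun_prop
  · apply DifferentiableAt.comp
    · simpa using hP
    · fun_prop
  · simp only [update_eq_self]
    rw [hW]
    exact fderiv_dotProduct_gradient_sub_eq_zero hH

theorem gradX_hamiltonianLagrangian (hH : DifferentiableAt ℝ (uncurry H) (a, P a (W i₀)))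
    (hP : DifferentiableAt ℝ (fun a' => P a' (W i₀)) a) (hW : W α = gradP H a (P a (W i₀))) :
    gradX (hamiltonianLagrangian H P i₀ α) a W = -gradQ H a (P a (W i₀)) := by
  have henv := fderiv_comp_eq_fderiv_fst_of_fderiv_snd_eq_zero (𝕜 := ℝ)
    (Φ := fun a' u => u ⬝ᵥ W α - H a' u) (g := fun a' => P a' (W i₀)) (e := a) ?_ hP ?_
  · funext j
    change fderiv ℝ (fun a' => P a' (W i₀) ⬝ᵥ W α - H a' (P a' (W i₀))) a (Pi.single j 1) = _
    rw [henv, fderiv_const_sub]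
    rfl
  · change DifferentiableAt ℝ (fun q => q.2 ⬝ᵥ W α - uncurry H q) _
    unfold dotProduct
    fun_prop
  · rw [hW]
    exact fderiv_dotProduct_gradient_sub_eq_zero
      (hH.comp (P a (W i₀)) ((differentiableAt_const a).prodMk differentiableAt_id))

end HamiltonianLagrangian

theorem lagrangian_from_hamiltonians_general {m N : ℕ} (hm : 0 < m)
    (H : Fin m → (Fin N → ℝ) → (Fin N → ℝ) → ℝ)
    (hH : ∀ α, ContDiff ℝ (⊤ : ℕ∞)
      (fun q : (Fin N → ℝ) × (Fin N → ℝ) => H α q.1 q.2))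
    (P : (Fin N → ℝ) → (Fin N → ℝ) → (Fin N → ℝ))
    (hP : ContDiff ℝ (⊤ : ℕ∞) (fun q : (Fin N → ℝ) × (Fin N → ℝ) => P q.1 q.2))
    (hP2 : ∀ a b : Fin N → ℝ, P a (gradP (H ⟨0, hm⟩) a b) = b)
    (L : Fin m → (Fin N → ℝ) → (Fin m → (Fin N → ℝ)) → ℝ)
    (hLdef : ∀ (α : Fin m) (a : Fin N → ℝ) (W : Fin m → (Fin N → ℝ)),
      L α a W = (∑ j, P a (W ⟨0, hm⟩) j * W α j) - H α a (P a (W ⟨0, hm⟩)))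
    (x p : (Fin m → ℝ) → (Fin N → ℝ))
    (hHam1 : ∀ (t : Fin m → ℝ) (α : Fin m), pdv x α t = gradP (H α) (x t) (p t))
    (hHam2 : ∀ (t : Fin m → ℝ) (α : Fin m), pdv p α t = -gradQ (H α) (x t) (p t)) :
    (∀ (t : Fin m → ℝ) (α β : Fin m), α ≠ β → gradV (L α) β (x t) (jet x t) = 0) ∧
    (∀ (t : Fin m → ℝ) (α : Fin m), gradV (L α) α (x t) (jet x t) = p t) ∧
    (∀ (t : Fin m → ℝ) (α : Fin m), pdv p α t = gradX (L α) (x t) (jet x t)) := by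
  set i₀ : Fin m := ⟨0, hm⟩
  obtain rfl : L = fun α => hamiltonianLagrangian (H α) P i₀ α := by
    funext α a W
    exact hLdef α a W
  have hHd (α : Fin m) : Differentiable ℝ (uncurry (H α)) := (hH α).differentiable (by simp)
  have hPd : Differentiable ℝ (uncurry P) := hP.differentiable (by simp)
  have hHp (α : Fin m) (a : Fin N → ℝ) : Differentiable ℝ (H α a) :=
    (hHd α).comp ((differentiable_const a).prodMk differentiable_id)
  have hPp (a : Fin N → ℝ) : Differentiable ℝ (P a) :=
    hPd.comp ((differentiable_const a).prodMk differentiable_id)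
  have hPx (v : Fin N → ℝ) : Differentiable ℝ (P · v) :=
    hPd.comp (differentiable_id.prodMk (differentiable_const v))
  have hmom (t : Fin m → ℝ) : P (x t) (jet x t i₀) = p t := by
    rw [jet, hHam1, hP2]
  have hvel (t : Fin m → ℝ) (α : Fin m) :
      jet x t α = gradP (H α) (x t) (P (x t) (jet x t i₀)) := by
    rw [hmom]
    exact hHam1 t α
  refine ⟨fun t α β hne => ?_, fun t α => ?_, fun t α => ?_⟩
  · rw [gradV_hamiltonianLagrangian (hHp α _ _) (hPp _ _) (hvel t α), if_neg hne.symm]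
  · rw [gradV_hamiltonianLagrangian (hHp α _ _) (hPp _ _) (hvel t α), if_pos rfl, hmom]
  · rw [gradX_hamiltonianLagrangian (hHd α _) (hPx _ _) (hvel t α), hmom, hHam2]

/-- Given commuting Hamiltonian flows `H_α` whose first Legendre
transformation is invertible via `P`, the Lagrangian 1-form with components
`L_1(x,v_1) = ⟨P(x,v_1),v_1⟩ − H_1(x,P(x,v_1))` and
`L_α(x,v_1,v_α) = ⟨P(x,v_1),v_α⟩ − H_α(x,P(x,v_1))` satisfies the multi-time
Euler–Lagrange equations along any common solution `(x,p)` of the Hamiltonian flows. -/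
theorem lagrangian_from_hamiltonians {m N : ℕ} (hm : 0 < m)
    (H : Fin m → (Fin N → ℝ) → (Fin N → ℝ) → ℝ)
    (hH : ∀ α, ContDiff ℝ (⊤ : ℕ∞)
      (fun q : (Fin N → ℝ) × (Fin N → ℝ) => H α q.1 q.2))
    (P : (Fin N → ℝ) → (Fin N → ℝ) → (Fin N → ℝ))
    (hP : ContDiff ℝ (⊤ : ℕ∞) (fun q : (Fin N → ℝ) × (Fin N → ℝ) => P q.1 q.2))
    (hP1 : ∀ a v : Fin N → ℝ, gradP (H ⟨0, hm⟩) a (P a v) = v)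
    (hP2 : ∀ a b : Fin N → ℝ, P a (gradP (H ⟨0, hm⟩) a b) = b)
    (L : Fin m → (Fin N → ℝ) → (Fin m → (Fin N → ℝ)) → ℝ)
    (hLdef : ∀ (α : Fin m) (a : Fin N → ℝ) (W : Fin m → (Fin N → ℝ)),
      L α a W = (∑ j, P a (W ⟨0, hm⟩) j * W α j) - H α a (P a (W ⟨0, hm⟩)))
    (x p : (Fin m → ℝ) → (Fin N → ℝ))
    (hx : ContDiff ℝ (⊤ : ℕ∞) x) (hp : ContDiff ℝ (⊤ : ℕ∞) p)
    (hHam1 : ∀ (t : Fin m → ℝ) (α : Fin m), pdv x α t = gradP (H α) (x t) (p t))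
    (hHam2 : ∀ (t : Fin m → ℝ) (α : Fin m), pdv p α t = -gradQ (H α) (x t) (p t)) :
    (∀ (t : Fin m → ℝ) (α β : Fin m), α ≠ β → gradV (L α) β (x t) (jet x t) = 0) ∧
    (∀ (t : Fin m → ℝ) (α : Fin m), gradV (L α) α (x t) (jet x t) = p t) ∧
    (∀ (t : Fin m → ℝ) (α : Fin m), pdv p α t = gradX (L α) (x t) (jet x t)) :=
  lagrangian_from_hamiltonians_general hm H hH P hP hP2 L hLdef x p hHam1 hHam2
end
end

section
/- Let Λ : ℝ^N × ℝ^N × ℝ → ℝ be continuously differentiable, and for each λ ∈ ℝ let F_λ = (X(·,·,λ), P(·,·,λ)) : ℝ^N × ℝ^N → ℝ^N × ℝ^N be a map, continuously differentiable in all variables including λ, satisfying the generating relations p = ∂Λ/∂x(x, X(x,p,λ); λ) and P(x,p,λ) = −∂Λ/∂y(x, X(x,p,λ); λ) for all (x,p,λ). Assume the maps commute pairwise: F_λ ∘ F_μ = F_μ ∘ F_λ for all λ, μ, and that there is a function ℓ : ℝ × ℝ → ℝ such that for all (x,p) and all λ, μ: Λ(x, x̃; λ) + Λ(x̃, ŷ;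 μ) − Λ(x, x̂; μ) − Λ(x̂, ŷ; λ) = ℓ(λ, μ), where x̃ = X(x,p,λ), x̂ = X(x,p,μ), and ŷ is the x-component of F_μ(F_λ(x,p)). Assume moreover ℓ(λ,μ) = −ℓ(μ,λ) for all λ, μ. Then ℓ(λ,μ) = 0 for all λ, μ if and only if the spectrality property holds: for all λ, μ and all (x,p), ∂Λ/∂λ(x̂, ŷ; λ) = ∂Λ/∂λ(x, x̃; λ), i.e., ∂Λ/∂λ(x, x̃; λ) is an integral of motion of every map F_μ. -/
noncomputable section

/-- Gradient of `Λ(x,y)` in the first argument. -/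
def gradA {N : ℕ} (Λ : (Fin N → ℝ) → (Fin N → ℝ) → ℝ) (a b : Fin N → ℝ) : Fin N → ℝ :=
  fun j => fderiv ℝ (fun a' => Λ a' b) a (Pi.single j 1)

/-- Gradient of `Λ(x,y)` in the second argument. -/
def gradB {N : ℕ} (Λ : (Fin N → ℝ) → (Fin N → ℝ) → ℝ) (a b : Fin N → ℝ) : Fin N → ℝ :=
  fun j => fderiv ℝ (fun b' => Λ a b') b (Pi.single j 1)

/-- Derivative of `Λ(x, y; λ)` in the parameter `λ`. -/
def dParam {N : ℕ} (Λ : (Fin N → ℝ) → (Fin N → ℝ) → ℝ → ℝ)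
    (a b : Fin N → ℝ) (l : ℝ) : ℝ :=
  deriv (fun s => Λ a b s) l

/-!
Differentiate the closure relation in `λ`. The points `x̃` and `ŷ` move with `λ`, but their
contributions cancel: by the generating relations `∂Λ/∂y(x, x̃; λ) = -p̃ = -∂Λ/∂x(x̃, ŷ; μ)`,
and, since `F_λ ∘ F_μ = F_μ ∘ F_λ`, both `∂Λ/∂y(x̃, ŷ; μ)` and `∂Λ/∂y(x̂, ŷ; λ)` equal minus the
momentum at `ŷ`. Only the explicit `λ`-dependence survives:
`∂ℓ(λ, μ)/∂λ = ∂Λ/∂λ(x, x̃; λ) - ∂Λ/∂λ(x̂, ŷ; λ)`.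
Spectrality therefore says that `ℓ(·, μ)` is constant, and `ℓ(μ, μ) = 0` by skew-symmetry.
-/

lemma ContinuousLinearMap.apply_eq_dotProduct_single {ι : Type*} [Fintype ι] [DecidableEq ι]
    (L : (ι → ℝ) →L[ℝ] ℝ) (u : ι → ℝ) : L u = u ⬝ᵥ fun j => L (Pi.single j 1) := by
  conv_lhs => rw [pi_eq_sum_univ' u]
  simp [dotProduct]

section

variable {N : ℕ} {Λ : (Fin N → ℝ) → (Fin N → ℝ) → ℝ → ℝ}
  {L : ((Fin N → ℝ) × (Fin N → ℝ)) × ℝ →L[ℝ] ℝ} {a b : Fin N → ℝ} {l : ℝ}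

lemma HasFDerivAt.dotProduct_gradA (hΛ : HasFDerivAt
    (fun q : ((Fin N → ℝ) × (Fin N → ℝ)) × ℝ => Λ q.1.1 q.1.2 q.2) L ((a, b), l))
    (u : Fin N → ℝ) :
    u ⬝ᵥ gradA (fun a b => Λ a b l) a b = L ((u, 0), 0) := by
  have h : HasFDerivAt (fun a' => Λ a' b l)
      (L.comp ((ContinuousLinearMap.inl ℝ _ ℝ).comp (ContinuousLinearMap.inl ℝ _ _))) a :=
    (hΛ.comp a <| (hasFDerivAt_prodMk_left (𝕜 := ℝ) (a, b) l).comp a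
      (hasFDerivAt_prodMk_left (𝕜 := ℝ) (f₀ := b) a) :)
  unfold gradA
  rw [h.fderiv, ← ContinuousLinearMap.apply_eq_dotProduct_single]
  rfl

lemma HasFDerivAt.dotProduct_gradB (hΛ : HasFDerivAt
    (fun q : ((Fin N → ℝ) × (Fin N → ℝ)) × ℝ => Λ q.1.1 q.1.2 q.2) L ((a, b), l))
    (v : Fin N → ℝ) :
    v ⬝ᵥ gradB (fun a b => Λ a b l) a b = L ((0, v), 0) := by
  have h : HasFDerivAt (fun b' => Λ a b' l)
      (L.comp ((ContinuousLinearMap.inl ℝ _ ℝ).comp (ContinuousLinearMap.inr ℝ _ _))) b :=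
    (hΛ.comp b <| (hasFDerivAt_prodMk_left (𝕜 := ℝ) (a, b) l).comp b
      (hasFDerivAt_prodMk_right (𝕜 := ℝ) (e₀ := a) b) :)
  unfold gradB
  rw [h.fderiv, ← ContinuousLinearMap.apply_eq_dotProduct_single]
  rfl

lemma HasFDerivAt.dParam_eq (hΛ : HasFDerivAt
    (fun q : ((Fin N → ℝ) × (Fin N → ℝ)) × ℝ => Λ q.1.1 q.1.2 q.2) L ((a, b), l)) :
    dParam Λ a b l = L ((0, 0), 1) :=
  (hΛ.comp_hasDerivAt l ((hasDerivAt_const l (a, b)).prodMk (hasDerivAt_id l))).deriv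

lemma hasDerivAt_lagrangian_comp {A B : ℝ → Fin N → ℝ} {C : ℝ → ℝ} {a' b' : Fin N → ℝ}
    {c' t : ℝ}
    (hΛ : DifferentiableAt ℝ (fun q : ((Fin N → ℝ) × (Fin N → ℝ)) × ℝ => Λ q.1.1 q.1.2 q.2)
      ((A t, B t), C t))
    (hA : HasDerivAt A a' t) (hB : HasDerivAt B b' t) (hC : HasDerivAt C c' t) :
    HasDerivAt (fun s => Λ (A s) (B s) (C s))
      (a' ⬝ᵥ gradA (fun a b => Λ a b (C t)) (A t) (B t)
        + b' ⬝ᵥ gradB (fun a b => Λ a b (C t)) (A t) (B t)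
        + c' * dParam Λ (A t) (B t) (C t)) t := by
  have hL := hΛ.hasFDerivAt
  rw [hL.dotProduct_gradA, hL.dotProduct_gradB, hL.dParam_eq, ← smul_eq_mul, ← map_smul,
    ← map_add, ← map_add]
  have hsplit : ((a', 0), 0) + ((0, b'), 0) + c' • ((0, 0), 1) = ((a', b'), c') := by
    simp
  rw [hsplit]
  exact hL.comp_hasDerivAt t ((hA.prodMk hB).prodMk hC)

variable (Λ) in
def plaquetteAction (F : ℝ → (Fin N → ℝ) × (Fin N → ℝ) → (Fin N → ℝ) × (Fin N → ℝ))
    (z : (Fin N → ℝ) × (Fin N → ℝ)) (l μ : ℝ) : ℝ :=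
  Λ z.1 (F l z).1 l + Λ (F l z).1 (F μ (F l z)).1 μ
    - Λ z.1 (F μ z).1 μ - Λ (F μ z).1 (F μ (F l z)).1 l

lemma hasDerivAt_plaquetteAction
    {F : ℝ → (Fin N → ℝ) × (Fin N → ℝ) → (Fin N → ℝ) × (Fin N → ℝ)}
    {z : (Fin N → ℝ) × (Fin N → ℝ)} {μ : ℝ}
    (hΛ : Differentiable ℝ (fun q : ((Fin N → ℝ) × (Fin N → ℝ)) × ℝ => Λ q.1.1 q.1.2 q.2))
    (hFl : DifferentiableAt ℝ (fun t => F t z) l) (hFμ : DifferentiableAt ℝ (F μ) (F l z))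
    (hgen1 : ∀ (l : ℝ) (z : (Fin N → ℝ) × (Fin N → ℝ)),
      z.2 = gradA (fun a b => Λ a b l) z.1 (F l z).1)
    (hgen2 : ∀ (l : ℝ) (z : (Fin N → ℝ) × (Fin N → ℝ)),
      (F l z).2 = -gradB (fun a b => Λ a b l) z.1 (F l z).1)
    (hcomm : F l (F μ z) = F μ (F l z)) :
    HasDerivAt (fun t => plaquetteAction Λ F z t μ)
      (dParam Λ z.1 (F l z).1 l - dParam Λ (F μ z).1 (F μ (F l z)).1 l) l := by
  set v := deriv (fun t => F t z) l
  have hv : HasDerivAt (fun t => F t z) v l := hFl.hasDerivAt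
  have hx : HasDerivAt (fun t => (F t z).1) v.1 l :=
    (hasFDerivAt_fst.comp_hasDerivAt l hv :)
  have hy : HasDerivAt (fun t => (F μ (F t z)).1) (fderiv ℝ (F μ) (F l z) v).1 l :=
    (hasFDerivAt_fst.comp_hasDerivAt l (hFμ.hasFDerivAt.comp_hasDerivAt l hv) :)
  have h₁ := hasDerivAt_lagrangian_comp (hΛ _) (hasDerivAt_const l z.1) hx (hasDerivAt_id' l)
  have h₂ := hasDerivAt_lagrangian_comp (hΛ _) hx hy (hasDerivAt_const l μ)
  have h₃ := hasDerivAt_lagrangian_comp (hΛ _) (hasDerivAt_const l (F μ z).1) hy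
    (hasDerivAt_id' l)
  refine (((h₁.add h₂).sub_const (Λ z.1 (F μ z).1 μ)).sub h₃).congr_deriv ?_
  have hgen2_hat := hgen2 l (F μ z)
  rw [hcomm] at hgen2_hat
  rw [← hgen1 μ (F l z), ← neg_eq_iff_eq_neg.mpr (hgen2 l z),
    ← neg_eq_iff_eq_neg.mpr (hgen2 μ (F l z)), ← neg_eq_iff_eq_neg.mpr hgen2_hat]
  simp only [zero_dotProduct, dotProduct_neg]
  ring

end

/-- For a family of Bäcklund transformations `F_λ` generated by
`Λ(x, y; λ)`, the discrete 1-form is closed on solutions (`ℓ(λ,μ) = 0`) if and only if the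
spectrality property holds: `∂Λ/∂λ(x, x̃; λ)` is a common integral of motion of all `F_μ`. -/
theorem spectrality {N : ℕ}
    (Λ : (Fin N → ℝ) → (Fin N → ℝ) → ℝ → ℝ)
    (hΛ : ContDiff ℝ 1
      (fun q : ((Fin N → ℝ) × (Fin N → ℝ)) × ℝ => Λ q.1.1 q.1.2 q.2))
    (F : ℝ → (Fin N → ℝ) × (Fin N → ℝ) → (Fin N → ℝ) × (Fin N → ℝ))
    (hF : ContDiff ℝ 1 (fun q : ℝ × ((Fin N → ℝ) × (Fin N → ℝ)) => F q.1 q.2))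
    (hgen1 : ∀ (l : ℝ) (z : (Fin N → ℝ) × (Fin N → ℝ)),
      z.2 = gradA (fun a b => Λ a b l) z.1 (F l z).1)
    (hgen2 : ∀ (l : ℝ) (z : (Fin N → ℝ) × (Fin N → ℝ)),
      (F l z).2 = -gradB (fun a b => Λ a b l) z.1 (F l z).1)
    (hcomm : ∀ l μ : ℝ, F l ∘ F μ = F μ ∘ F l)
    (ℓ : ℝ → ℝ → ℝ)
    (hℓ : ∀ (z : (Fin N → ℝ) × (Fin N → ℝ)) (l μ : ℝ),
      Λ z.1 (F l z).1 l + Λ (F l z).1 (F μ (F l z)).1 μ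
        - Λ z.1 (F μ z).1 μ - Λ (F μ z).1 (F μ (F l z)).1 l = ℓ l μ)
    (hskew : ∀ l μ : ℝ, ℓ l μ = -ℓ μ l) :
    (∀ l μ : ℝ, ℓ l μ = 0) ↔
    (∀ (l μ : ℝ) (z : (Fin N → ℝ) × (Fin N → ℝ)),
      dParam Λ (F μ z).1 (F μ (F l z)).1 l = dParam Λ z.1 (F l z).1 l) := by
  have hΛ' := hΛ.differentiable one_ne_zero
  have hF' := hF.differentiable one_ne_zero
  have hℓ_deriv : ∀ l μ z, HasDerivAt (fun t => ℓ t μ)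
      (dParam Λ z.1 (F l z).1 l - dParam Λ (F μ z).1 (F μ (F l z)).1 l) l := by
    intro l μ z
    have hFl : DifferentiableAt ℝ (fun t => F t z) l :=
      (hF'.comp (differentiable_id.prodMk (differentiable_const z))) l
    have hFμ : DifferentiableAt ℝ (F μ) (F l z) :=
      (hF'.comp ((differentiable_const μ).prodMk differentiable_id)) _
    rw [show (fun t => ℓ t μ) = fun t => plaquetteAction Λ F z t μ from
      funext fun t => (hℓ z t μ).symm]
    exact hasDerivAt_plaquetteAction hΛ' hFl hFμ hgen1 hgen2 (congrFun (hcomm l μ) z)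
  constructor
  · intro hclosed l μ z
    have h := hℓ_deriv l μ z
    simp only [hclosed] at h
    exact (sub_eq_zero.mp ((hasDerivAt_const l 0).unique h).symm).symm
  · intro hspec l μ
    have hℓ_const : ∀ t, HasDerivAt (fun t => ℓ t μ) 0 t := fun t => by
      simpa [hspec] using hℓ_deriv t μ 0
    have hℓ_eq : ℓ l μ = ℓ μ μ := is_const_of_deriv_eq_zero
      (fun t => (hℓ_const t).differentiableAt) (fun t => (hℓ_const t).deriv) l μ
    linarith [hskew μ μ]
end
end

section
/- Let N ≥ 1, λ, μ ∈ ℝ, and let x, x̃, x̂, ŷ : ℤ/Nℤ → ℝ be sequences such that λ e^{x̂_k} − μ e^{x̃_k} ≠ 0 for all k and the superposition formula holds for all k ∈ ℤ/Nℤ: e^{ŷ_k − x̃_k − x̂_k + x_{k+1}} = (λ e^{x̂_{k+1}} − μ e^{x̃_{k+1}}) / (λ e^{x̂_k} − μ e^{x̃_k}). Then Σ_{k=1}^N (ŷ_k − x̃_k − x̂_k + x_k) = 0, equivalently ∏_{k=1}^N e^{ŷ_k − x̃_k − x̂_k + x_k} = 1. -/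
/-!
Writing `s k = ŷ_k − x̃_k − x̂_k + x_k`, the superposition formula says that
`exp (s k + (x_{k+1} − x_k))` is the ratio `f (k+1) / f k` of the nonzero quantities
`f k = λ e^{x̂_k} − μ e^{x̃_k}`. Around the periodic lattice both the ratios and the
differences `x_{k+1} − x_k` telescope, so `exp (∑ s) = 1`.
-/

open Finset

theorem Fintype.sum_comp_add_sub_self {G M : Type*} [AddGroup G] [Fintype G] [AddCommGroup M]
    (g : G → M) (a : G) : ∑ k, (g (k + a) - g k) = 0 := by
  rw [sum_sub_distrib, Fintype.sum_equiv (Equiv.addRight a) (fun k => g (k + a)) g fun _ => rfl,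
    sub_self]

theorem Fintype.prod_comp_add_div_self {G K : Type*} [AddGroup G] [Fintype G]
    [CommGroupWithZero K] (f : G → K) (hf : ∀ k, f k ≠ 0) (a : G) :
    ∏ k, f (k + a) / f k = 1 := by
  rw [prod_div_distrib, Fintype.prod_equiv (Equiv.addRight a) (fun k => f (k + a)) f fun _ => rfl,
    div_self (prod_ne_zero_iff.2 fun k _ => hf k)]

theorem toda_one_form_closed_general (N : ℕ) [NeZero N] (lam mu : ℝ)
    (x xt xh yh : ZMod N → ℝ)
    (hden : ∀ k : ZMod N, lam * Real.exp (xh k) - mu * Real.exp (xt k) ≠ 0)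
    (hsup : ∀ k : ZMod N,
      Real.exp (yh k - xt k - xh k + x (k + 1)) =
        (lam * Real.exp (xh (k + 1)) - mu * Real.exp (xt (k + 1))) /
          (lam * Real.exp (xh k) - mu * Real.exp (xt k))) :
    (∑ k, (yh k - xt k - xh k + x k)) = 0 ∧
    (∏ k, Real.exp (yh k - xt k - xh k + x k)) = 1 := by
  have hshifted : ∑ k, (yh k - xt k - xh k + x (k + 1)) = 0 := by
    rw [← Real.exp_eq_one_iff, Real.exp_sum, prod_congr rfl fun k _ => hsup k]
    exact Fintype.prod_comp_add_div_self (fun k => lam * Real.exp (xh k) - mu * Real.exp (xt k))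
      hden 1
  have hsum : ∑ k, (yh k - xt k - xh k + x k) = 0 := by
    have hsplit : ∑ k, (yh k - xt k - xh k + x (k + 1))
        = ∑ k, (yh k - xt k - xh k + x k) + ∑ k, (x (k + 1) - x k) := by
      rw [← sum_add_distrib]
      exact sum_congr rfl fun k _ => by ring
    rwa [hsplit, Fintype.sum_comp_add_sub_self, add_zero] at hshifted
  exact ⟨hsum, by rw [← Real.exp_sum, hsum, Real.exp_zero]⟩

/-- If the superposition formula of the Toda Bäcklund transformations
holds at every site of the periodic lattice, then `Σ_k (x̂̃_k − x̃_k − x̂_k + x_k) = 0`,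
equivalently `∏_k e^{x̂̃_k − x̃_k − x̂_k + x_k} = 1`. Here `xt = x̃`, `xh = x̂`, `yh = x̂̃`. -/
theorem toda_one_form_closed (N : ℕ) [NeZero N] (hN : 1 ≤ N) (lam mu : ℝ)
    (x xt xh yh : ZMod N → ℝ)
    (hden : ∀ k : ZMod N, lam * Real.exp (xh k) - mu * Real.exp (xt k) ≠ 0)
    (hsup : ∀ k : ZMod N,
      Real.exp (yh k - xt k - xh k + x (k + 1)) =
        (lam * Real.exp (xh (k + 1)) - mu * Real.exp (xt (k + 1))) /
          (lam * Real.exp (xh k) - mu * Real.exp (xt k))) :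
    (∑ k, (yh k - xt k - xh k + x k)) = 0 ∧
    (∏ k, Real.exp (yh k - xt k - xh k + x k)) = 1 :=
  toda_one_form_closed_general N lam mu x xt xh yh hden hsup
end

section
/- Let N ≥ 1 and λ, μ ∈ ℝ \ {0}. For sequences u, v : ℤ/Nℤ → ℝ define Λ(u, v; λ) = (1/λ) Σ_{k=1}^N (e^{v_k − u_k} − 1 − (v_k − u_k)) − λ Σ_{k=1}^N e^{u_{k+1} − v_k}. Let x, x̃, x̂, ŷ : ℤ/Nℤ → ℝ be sequences satisfying, for all k ∈ ℤ/Nℤ, the two superposition identities (1/λ) e^{x̃_{k+1} − x_{k+1}} − (1/μ) e^{x̂_{k+1} − x_{k+1}} − (1/λ) e^{ŷ_k − x̂_k} + (1/μ) e^{ŷ_k − x̃_k} = 0 and λ e^{x_{k+1} − x̃_k} − μ e^{x_{k+1} − x̂_k} − λ e^{x̂_{k+1} − ŷ_k} + μ e^{x̃_{k+1} − ŷ_k} = 0. Then Λ(x, x̃; λ) + Λ(x̃, ŷ; μ) − Λ(x, x̂; μ) − Λ(x̂, ŷ; λ) = (1/λ − 1/μ) Σ_{k=1}^N (ŷ_k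 − x̃_k − x̂_k + x_k). -/
/-! The constant and linear terms of the four Lagrangians cancel down to the right-hand side,
while their exponential terms are exactly the two superposition identities summed over the
periodic lattice (the kinetic ones after the index shift `k ↦ k + 1`), hence vanish. -/

noncomputable section

/-- The Lagrangian of the Toda Bäcklund transformation with parameter `λ`:
`Λ(u,v;λ) = (1/λ) Σ_k (e^{v_k−u_k} − 1 − (v_k−u_k)) − λ Σ_k e^{u_{k+1}−v_k}`. -/
def todaLagr {N : ℕ} [NeZero N] (lam : ℝ) (u v : ZMod N → ℝ) : ℝ :=
  (1 / lam) * ∑ k, (Real.exp (v k - u k) - 1 - (v k - u k)) -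
    lam * ∑ k, Real.exp (u (k + 1) - v k)

open Real

theorem todaLagr_square_eq {N : ℕ} [NeZero N] (lam mu : ℝ) (x xt xh yh : ZMod N → ℝ) :
    todaLagr lam x xt + todaLagr mu xt yh - todaLagr mu x xh - todaLagr lam xh yh =
      ∑ k, ((1 / lam) * exp (xt (k + 1) - x (k + 1)) - (1 / mu) * exp (xh (k + 1) - x (k + 1)) -
          (1 / lam) * exp (yh k - xh k) + (1 / mu) * exp (yh k - xt k)) -
        ∑ k, (lam * exp (x (k + 1) - xt k) - mu * exp (x (k + 1) - xh k) -
          lam * exp (xh (k + 1) - yh k) + mu * exp (xt (k + 1) - yh k)) +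
        (1 / lam - 1 / mu) * ∑ k, (yh k - xt k - xh k + x k) := by
  have shift (f : ZMod N → ℝ) : ∑ k, f (k + 1) = ∑ k, f k :=
    Equiv.sum_comp (Equiv.addRight (1 : ZMod N)) f
  unfold todaLagr
  simp only [Finset.sum_add_distrib, Finset.sum_sub_distrib, ← Finset.mul_sum,
    shift fun k => exp (xt k - x k), shift fun k => exp (xh k - x k)]
  ring

theorem toda_square_value_general (N : ℕ) [NeZero N]
    (lam mu : ℝ)
    (x xt xh yh : ZMod N → ℝ)
    (hsup1 : ∀ k : ZMod N,
      (1 / lam) * Real.exp (xt (k + 1) - x (k + 1)) -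
        (1 / mu) * Real.exp (xh (k + 1) - x (k + 1)) -
        (1 / lam) * Real.exp (yh k - xh k) +
        (1 / mu) * Real.exp (yh k - xt k) = 0)
    (hsup2 : ∀ k : ZMod N,
      lam * Real.exp (x (k + 1) - xt k) - mu * Real.exp (x (k + 1) - xh k) -
        lam * Real.exp (xh (k + 1) - yh k) + mu * Real.exp (xt (k + 1) - yh k) = 0) :
    todaLagr lam x xt + todaLagr mu xt yh - todaLagr mu x xh - todaLagr lam xh yh =
      (1 / lam - 1 / mu) * ∑ k, (yh k - xt k - xh k + x k) := by
  rw [todaLagr_square_eq, Finset.sum_eq_zero fun k _ => hsup1 k,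
    Finset.sum_eq_zero fun k _ => hsup2 k, sub_zero, zero_add]

/-- Under the two superposition identities of the Toda Bäcklund
transformations, the exterior derivative of the discrete Lagrangian 1-form on an elementary
square equals `(1/λ − 1/μ) Σ_k (x̂̃_k − x̃_k − x̂_k + x_k)`.
Here `xt = x̃`, `xh = x̂`, `yh = x̂̃`. -/
theorem toda_square_value (N : ℕ) [NeZero N] (hN : 1 ≤ N)
    (lam mu : ℝ) (hlam : lam ≠ 0) (hmu : mu ≠ 0)
    (x xt xh yh : ZMod N → ℝ)
    (hsup1 : ∀ k : ZMod N,
      (1 / lam) * Real.exp (xt (k + 1) - x (k + 1)) -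
        (1 / mu) * Real.exp (xh (k + 1) - x (k + 1)) -
        (1 / lam) * Real.exp (yh k - xh k) +
        (1 / mu) * Real.exp (yh k - xt k) = 0)
    (hsup2 : ∀ k : ZMod N,
      lam * Real.exp (x (k + 1) - xt k) - mu * Real.exp (x (k + 1) - xh k) -
        lam * Real.exp (xh (k + 1) - yh k) + mu * Real.exp (xt (k + 1) - yh k) = 0) :
    todaLagr lam x xt + todaLagr mu xt yh - todaLagr mu x xh - todaLagr lam xh yh =
      (1 / lam - 1 / mu) * ∑ k, (yh k - xt k - xh k + x k) :=
  toda_square_value_general N lam mu x xt xh yh hsup1 hsup2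
end
end

section
/- Let μ ∈ ℝ \ {0} and let x, x̂, p : ℤ → ℝ and ψ : ℤ → ℝ \ {0} be sequences such that for all k: p_k = (1/μ)(e^{x̂_k − x_k} − 1) + μ e^{x_k − x̂_{k−1}} and e^{x̂_k − x_k} = μ ψ_{k+1} / ψ_k. Then for all k: ψ_{k+1} = (1/μ + p_k) ψ_k − e^{x_k − x_{k−1}} ψ_{k−1}. -/
theorem Real.exp_sub_div_exp_sub (a b c : ℝ) : exp (a - b) / exp (c - b) = exp (a - c) := by
  rw [← exp_sub]
  ring_nf

/-- One step of the Bäcklund relation, with `u = e^{x̂_k − x_k}`, `um = e^{x̂_{k−1} − x_{k−1}}`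
and `r = e^{x_k − x_{k−1}}`, so that `e^{x_k − x̂_{k−1}} = r / um`. -/
theorem eq_spectral_of_backlund {K : Type*} [Field K] {μ ψm ψ ψp u um r p : K}
    (hμ : μ ≠ 0) (hψ : ψ ≠ 0) (hu : u = μ * (ψp / ψ)) (hum : um = μ * (ψ / ψm))
    (hp : p = 1 / μ * (u - 1) + μ * (r / um)) :
    ψp = (1 / μ + p) * ψ - r * ψm := by
  have hr : μ * (r / um) = r * ψm / ψ := by
    rw [hum, div_mul_eq_div_div, div_div_eq_mul_div]
    field_simp
  rw [hp, hr, hu]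
  field_simp
  ring

/-- Substituting `e^{x̂_k − x_k} = μ ψ_{k+1}/ψ_k` into the defining
equation of the Toda Bäcklund transformation `F_μ` yields the spectral difference equation
`ψ_{k+1} = (1/μ + p_k) ψ_k − e^{x_k − x_{k−1}} ψ_{k−1}` of the Toda hierarchy.
Here `xh = x̂`. -/
theorem toda_wave_function_equation (mu : ℝ) (hmu : mu ≠ 0)
    (x xh p : ℤ → ℝ) (ψ : ℤ → ℝ) (hψ : ∀ k, ψ k ≠ 0)
    (hBT : ∀ k : ℤ, p k = (1 / mu) * (Real.exp (xh k - x k) - 1) +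
      mu * Real.exp (x k - xh (k - 1)))
    (hsub : ∀ k : ℤ, Real.exp (xh k - x k) = mu * (ψ (k + 1) / ψ k)) :
    ∀ k : ℤ, ψ (k + 1) = (1 / mu + p k) * ψ k - Real.exp (x k - x (k - 1)) * ψ (k - 1) := by
  intro k
  have hsub_pred : Real.exp (xh (k - 1) - x (k - 1)) = mu * (ψ k / ψ (k - 1)) := by
    simpa using hsub (k - 1)
  refine eq_spectral_of_backlund hmu (hψ k) (hsub k) hsub_pred ?_
  rw [Real.exp_sub_div_exp_sub]
  exact hBT k
end

section
/- Let λ ∈ ℝ \ {0} and let x, x̃, p, p̃ : ℤ → ℝ be sequences satisfying, for all k, the Bäcklund transformation equations p_k = (1/λ)(e^{x̃_k − x_k} − 1) + λ e^{x_k − x̃_{k−1}} and p̃_k = (1/λ)(e^{x̃_k − x_k} − 1) + λ e^{x_{k+1} − x̃_k}. For μ ∈ ℝ \ {0} define the 2×2 real matrices L_k(μ) = [[1/μ + p_k, e^{x_k}], [−e^{−x_k}, 0]], L̃_k(μ) = [[1/μ + p̃_k, e^{x̃_k}], [−e^{−x̃_k}, 0]], and V_k(μ) = [[1 − λ/μ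 − λ² e^{x_k − x̃_{k−1}}, −λ e^{x_k}], [λ e^{−x̃_{k−1}}, 1]]. Then the zero-curvature relation L̃_k(μ) V_k(μ) = V_{k+1}(μ) L_k(μ) holds for all k ∈ ℤ and all μ ∈ ℝ \ {0}. -/
/-!
With `s = 1/μ` and the exponentials `e^{x_k}`, `e^{x̃_k}`, ... treated as independent nonzero
quantities, the zero-curvature relation is an entrywise identity of rational functions once
`p_k` and `p̃_k` are eliminated via the Bäcklund equations; it therefore holds over any field.
-/

open Matrix

section ZeroCurvature

variable {K : Type*} [Field K]

/-- The Toda Lax matrix `L_k(μ)` written with `s = 1/μ` and `u = e^{x_k}`. -/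
def todaLax (s p u : K) : Matrix (Fin 2) (Fin 2) K :=
  !![s + p, u; -u⁻¹, 0]

/-- The Bäcklund matrix `V_k(μ)` written with `s = 1/μ`, `u = e^{x_k}` and `w = e^{x̃_{k-1}}`. -/
def backlundMatrix (lam s u w : K) : Matrix (Fin 2) (Fin 2) K :=
  !![1 - lam * s - lam ^ 2 * (u / w), -lam * u; lam * w⁻¹, 1]

theorem todaLax_mul_backlundMatrix {lam s p pt u ut w unext : K} (hlam : lam ≠ 0)
    (hu : u ≠ 0) (hut : ut ≠ 0)
    (hp : p = lam⁻¹ * (ut / u - 1) + lam * (u / w))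
    (hpt : pt = lam⁻¹ * (ut / u - 1) + lam * (unext / ut)) :
    todaLax s pt ut * backlundMatrix lam s u w =
      backlundMatrix lam s unext ut * todaLax s p u := by
  subst hp hpt
  simp only [todaLax, backlundMatrix, mul_fin_two, EmbeddingLike.apply_eq_iff_eq, vecCons_inj,
    and_true]
  refine ⟨⟨?_, ?_⟩, ?_, ?_⟩ <;> field_simp <;> ring

end ZeroCurvature

/-- The Bäcklund transformation `F_λ` of the Toda lattice admits the
zero-curvature representation `L̃_k(μ) V_k(μ) = V_{k+1}(μ) L_k(μ)` with spectral parameter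
`μ`. Here `xt = x̃`, `pt = p̃`. -/
theorem toda_zero_curvature (lam : ℝ) (hlam : lam ≠ 0)
    (x xt p pt : ℤ → ℝ)
    (h1 : ∀ k : ℤ, p k = (1 / lam) * (Real.exp (xt k - x k) - 1) +
      lam * Real.exp (x k - xt (k - 1)))
    (h2 : ∀ k : ℤ, pt k = (1 / lam) * (Real.exp (xt k - x k) - 1) +
      lam * Real.exp (x (k + 1) - xt k)) :
    ∀ (k : ℤ) (mu : ℝ), mu ≠ 0 →
      (!![1 / mu + pt k, Real.exp (xt k); -Real.exp (-xt k), 0] :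
          Matrix (Fin 2) (Fin 2) ℝ) *
        !![1 - lam / mu - lam ^ 2 * Real.exp (x k - xt (k - 1)), -lam * Real.exp (x k);
           lam * Real.exp (-xt (k - 1)), 1] =
      (!![1 - lam / mu - lam ^ 2 * Real.exp (x (k + 1) - xt k), -lam * Real.exp (x (k + 1));
           lam * Real.exp (-xt k), 1] :
          Matrix (Fin 2) (Fin 2) ℝ) *
        !![1 / mu + p k, Real.exp (x k); -Real.exp (-x k), 0] := by
  intro k mu _
  simp only [Real.exp_sub, Real.exp_neg, one_div] at h1 h2 ⊢
  rw [div_eq_mul_inv lam mu]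
  exact todaLax_mul_backlundMatrix hlam (Real.exp_ne_zero _) (Real.exp_ne_zero _) (h1 k) (h2 k)
end
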